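/- arXiv:2407.18073 — 3 statements merged into one kernel-verified Lean document; each statement's English description precedes it below -/
import Mathlib

section
/- Let A be a Banach–Tate ring, M a Banach A-module, and P a finite Banach A-module, i.e. a Banach A-module that is finitely generated as an A-module. Then every A-linear map φ:P→M (with no continuity assumption) is continuous. -/
/-!
Choosing generators of `P` gives a continuous surjection `π : Aⁿ → P`, and Banach's open mapping
argument goes through over `A`: by Baire, the closure of the image of some ball contains a ball;
rescaling by powers of the unit `ϖ` (with `‖ϖ‖ < 1`) gives such inclusions at all scales with
geometrically shrinking radii, and completeness of `Aⁿ` turns approximate preimages into exact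
ones. Hence `π` is open, so a quotient map, and `φ` is continuous because `φ ∘ π`, a linear map
out of `Aⁿ`, is.
-/

open scoped Classical

universe u v w

/-- A (non-archimedean, submultiplicative) ring norm with values in `ℝ`. -/
structure IsRingNorm {A : Type*} [Ring A] (v : A → ℝ) : Prop where
  nonneg : ∀ a, 0 ≤ v a
  eq_zero_iff : ∀ a, v a = 0 ↔ a = 0
  map_one : v 1 = 1
  map_neg : ∀ a, v (-a) = v a
  add_le : ∀ a b, v (a + b) ≤ max (v a) (v b)
  mul_le : ∀ a b, v (a * b) ≤ v a * v b

theorem IsRingNorm.map_zero {A : Type*} [Ring A] {v : A → ℝ} (hv : IsRingNorm v) :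
    v 0 = 0 := (hv.eq_zero_iff 0).mpr rfl

/-- A norm on an `A`-module, compatible with a ring norm `v` on `A`. -/
structure IsModuleNorm {A : Type*} [Ring A] (v : A → ℝ) {M : Type*} [AddCommGroup M]
    [Module A M] (nm : M → ℝ) : Prop where
  nonneg : ∀ m, 0 ≤ nm m
  eq_zero_iff : ∀ m, nm m = 0 ↔ m = 0
  map_neg : ∀ m, nm (-m) = nm m
  add_le : ∀ m n, nm (m + n) ≤ max (nm m) (nm n)
  smul_le : ∀ (a : A) (m : M), nm (a • m) ≤ v a * nm m

/-- A sequence is Cauchy with respect to a norm. -/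
def NormCauchy {M : Type*} [AddCommGroup M] (nm : M → ℝ) (s : ℕ → M) : Prop :=
  ∀ ε : ℝ, 0 < ε → ∃ N : ℕ, ∀ i j : ℕ, N ≤ i → N ≤ j → nm (s i - s j) < ε

/-- A sequence converges to `x` with respect to a norm. -/
def NormLim {M : Type*} [AddCommGroup M] (nm : M → ℝ) (s : ℕ → M) (x : M) : Prop :=
  ∀ ε : ℝ, 0 < ε → ∃ N : ℕ, ∀ i : ℕ, N ≤ i → nm (s i - x) < ε

/-- Completeness: every Cauchy sequence converges. -/
def NormComplete {M : Type*} [AddCommGroup M] (nm : M → ℝ) : Prop :=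
  ∀ s : ℕ → M, NormCauchy nm s → ∃ x : M, NormLim nm s x

/-- Continuity of a map between modules equipped with norms. -/
def NormContinuous {M N : Type*} [AddCommGroup M] [AddCommGroup N]
    (nmM : M → ℝ) (nmN : N → ℝ) (f : M → N) : Prop :=
  ∀ m : M, ∀ ε : ℝ, 0 < ε → ∃ δ : ℝ, 0 < δ ∧
    ∀ m' : M, nmM (m' - m) < δ → nmN (f m' - f m) < ε

/-- A Banach–Tate ring: a complete normed ring containing a multiplicative
topologically nilpotent unit. -/
structure IsBanachTate {A : Type*} [Ring A] (v : A → ℝ) : Prop where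
  isRingNorm : IsRingNorm v
  complete : NormComplete v
  exists_unit : ∃ ϖ : A, IsUnit ϖ ∧ v ϖ < 1 ∧ ∀ b, v (ϖ * b) = v ϖ * v b

open Metric Filter Topology Function Set

section OpenMapping

variable {E P F : Type*} [NormedAddCommGroup E] [NormedAddCommGroup P] [FunLike F E P]

theorem exists_ball_subset_closure_image [CompleteSpace P] [AddMonoidHomClass F E P] (f : F)
    (hf : Surjective f) :
    ∃ c : ℝ, ∃ r > 0, ball 0 r ⊆ closure (f '' closedBall 0 c) := by
  have hcover : ⋃ n : ℕ, closure (f '' closedBall 0 n) = univ := by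
    refine eq_univ_of_forall fun p => mem_iUnion.2 ?_
    obtain ⟨a, rfl⟩ := hf p
    obtain ⟨n, hn⟩ := exists_nat_ge ‖a‖
    exact ⟨n, subset_closure (mem_image_of_mem f (mem_closedBall_zero_iff.2 hn))⟩
  obtain ⟨n, p₀, hp₀⟩ := nonempty_interior_of_iUnion_of_closed (fun _ => isClosed_closure) hcover
  obtain ⟨r, hr, hball⟩ := Metric.isOpen_iff.1 isOpen_interior p₀ hp₀
  refine ⟨2 * n, r, hr, fun p hp => ?_⟩
  have h₁ : p₀ + p ∈ closure (f '' closedBall 0 n) :=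
    interior_subset (hball (by simpa [dist_eq_norm] using hp))
  simpa using map_mem_closure₂ continuous_sub h₁ (interior_subset hp₀) (by
    rintro _ ⟨a, ha, rfl⟩ _ ⟨b, hb, rfl⟩
    refine ⟨a - b, ?_, map_sub f a b⟩
    rw [mem_closedBall_zero_iff] at *
    linarith [norm_sub_le a b])

theorem ball_subset_image_closedBall_of_subset_closure [CompleteSpace E] [AddMonoidHomClass F E P]
    (f : F) (hf : Continuous f) {r c : ℕ → ℝ} (hr_pos : ∀ m, 0 < r m) (hr : Tendsto r atTop (𝓝 0))
    (hc : Summable c) (h : ∀ m, ball 0 (r m) ⊆ closure (f '' closedBall 0 (c m))) :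
    ball 0 (r 0) ⊆ f '' closedBall 0 (∑' m, c m) := by
  intro p hp
  have step : ∀ m, ∀ y ∈ ball (0 : P) (r m),
      ∃ a ∈ closedBall (0 : E) (c m), y - f a ∈ ball 0 (r (m + 1)) := by
    intro m y hy
    obtain ⟨_, ⟨a, ha, rfl⟩, hya⟩ := Metric.mem_closure_iff.1 (h m hy) _ (hr_pos (m + 1))
    exact ⟨a, ha, by simpa [dist_eq_norm] using hya⟩
  choose! g hg hgr using step
  let rem : ℕ → P := fun m => Nat.rec p (fun m y => y - f (g m y)) m
  have hrem : ∀ m, rem m ∈ ball 0 (r m) := by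
    intro m
    induction m with
    | zero => exact hp
    | succ m ih => exact hgr m _ ih
  set a : ℕ → E := fun m => g m (rem m)
  have ha : ∀ m, ‖a m‖ ≤ c m := fun m => mem_closedBall_zero_iff.1 (hg m _ (hrem m))
  have hsum : ∀ N, ∑ m ∈ Finset.range N, f (a m) = p - rem N := by
    intro N
    induction N with
    | zero => simp [rem]
    | succ N ih =>
      rw [Finset.sum_range_succ, ih]
      show _ = p - (rem N - f (a N))
      abel
  have hrem_lim : Tendsto rem atTop (𝓝 0) :=
    squeeze_zero_norm (fun m => (mem_ball_zero_iff.1 (hrem m)).le) hr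
  have hL : HasSum a (∑' m, a m) := (hc.of_norm_bounded ha).hasSum
  refine ⟨∑' m, a m, mem_closedBall_zero_iff.2 (tsum_of_norm_bounded hc.hasSum ha), ?_⟩
  refine tendsto_nhds_unique (hL.map f hf).tendsto_sum_nat ?_
  simpa [hsum] using tendsto_const_nhds.sub hrem_lim

variable {A : Type*} [NormedRing A] [NormOneClass A] [Module A E] [Module A P]
  [IsBoundedSMul A E] [IsBoundedSMul A P] [LinearMapClass F A E P]

theorem ball_mul_subset_closure_image_closedBall_mul (f : F) (u : Aˣ) {r c : ℝ}
    (h : ball 0 r ⊆ closure (f '' closedBall 0 c)) :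
    ball 0 (r * ‖(↑u⁻¹ : A)‖⁻¹) ⊆ closure (f '' closedBall 0 (‖(u : A)‖ * c)) := by
  have : Nontrivial A := NormOneClass.nontrivial
  intro p hp
  have hinv : (↑u⁻¹ : A) • p ∈ ball 0 r := by
    rw [mem_ball_zero_iff] at hp ⊢
    calc ‖(↑u⁻¹ : A) • p‖ ≤ ‖(↑u⁻¹ : A)‖ * ‖p‖ := norm_smul_le _ _
      _ < r := by rwa [← lt_div_iff₀' (Units.norm_pos u⁻¹), div_eq_mul_inv]
  have hmaps :
      MapsTo ((u : A) • ·) (f '' closedBall 0 c) (f '' closedBall 0 (‖(u : A)‖ * c)) := by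
    rintro _ ⟨a, ha, rfl⟩
    refine ⟨(u : A) • a, ?_, map_smul f _ _⟩
    rw [mem_closedBall_zero_iff] at ha ⊢
    exact (norm_smul_le _ _).trans (mul_le_mul_of_nonneg_left ha (norm_nonneg _))
  simpa [smul_smul] using map_mem_closure (continuous_const_smul (u : A)) (h hinv) hmaps

theorem ball_mul_pow_subset_closure_image_closedBall_pow_mul (f : F) (u : Aˣ)
    {r c : ℝ} (h : ball 0 r ⊆ closure (f '' closedBall 0 c)) (m : ℕ) :
    ball 0 (r * ‖(↑u⁻¹ : A)‖⁻¹ ^ m) ⊆ closure (f '' closedBall 0 (‖(u : A)‖ ^ m * c)) := by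
  induction m with
  | zero => simpa using h
  | succ m ih =>
    rw [pow_succ, pow_succ', ← mul_assoc r, mul_assoc ‖(u : A)‖]
    exact ball_mul_subset_closure_image_closedBall_mul f u ih

theorem ContinuousLinearMap.isOpenMap_of_norm_unit_lt_one [CompleteSpace E] [CompleteSpace P]
    (f : E →L[A] P) (hf : Surjective f) (u : Aˣ) (hu : ‖(u : A)‖ < 1) : IsOpenMap f := by
  have : Nontrivial A := NormOneClass.nontrivial
  obtain ⟨c, r, hr, hball⟩ := exists_ball_subset_closure_image f hf
  set t := ‖(u : A)‖
  set q := ‖(↑u⁻¹ : A)‖⁻¹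
  have hq0 : 0 < q := inv_pos.2 (Units.norm_pos u⁻¹)
  have hq1 : q < 1 := by
    have h1 : 1 ≤ t * ‖(↑u⁻¹ : A)‖ := by simpa using norm_mul_le (u : A) ↑u⁻¹
    exact inv_lt_one_of_one_lt₀ (by nlinarith [norm_nonneg (↑u⁻¹ : A), norm_nonneg (u : A)])
  have hlift (j : ℕ) : ball 0 (r * q ^ j) ⊆ f '' closedBall 0 ((1 - t)⁻¹ * (t ^ j * c)) := by
    have hball_j := ball_mul_pow_subset_closure_image_closedBall_pow_mul f u hball j
    have hsum := (hasSum_geometric_of_lt_one (norm_nonneg _) hu).mul_right (t ^ j * c)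
    rw [← hsum.tsum_eq]
    simpa using ball_subset_image_closedBall_of_subset_closure f f.continuous
      (r := fun m => r * q ^ j * q ^ m) (fun m => by positivity)
      (by simpa using (tendsto_pow_atTop_nhds_zero_of_lt_one hq0.le hq1).const_mul (r * q ^ j))
      hsum.summable (ball_mul_pow_subset_closure_image_closedBall_pow_mul f u hball_j)
  refine IsTopologicalAddGroup.isOpenMap_iff_nhds_zero.2 ?_
  rw [(nhds_basis_closedBall.map f).ge_iff]
  intro ε hε
  have hsmall : Tendsto (fun j => (1 - t)⁻¹ * (t ^ j * c)) atTop (𝓝 0) := by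
    simpa using ((tendsto_pow_atTop_nhds_zero_of_lt_one (norm_nonneg _) hu).mul_const c).const_mul
      (1 - t)⁻¹
  obtain ⟨j, hj⟩ := (hsmall.eventually (ge_mem_nhds hε)).exists
  exact mem_of_superset (ball_mem_nhds 0 (by positivity))
    ((hlift j).trans (image_mono (closedBall_subset_closedBall hj)))

theorem LinearMap.continuous_of_finite [CompleteSpace A] [CompleteSpace P] [Module.Finite A P]
    {M : Type*} [SeminormedAddCommGroup M] [Module A M] [IsBoundedSMul A M]
    (u : Aˣ) (hu : ‖(u : A)‖ < 1) (φ : P →ₗ[A] M) : Continuous φ := by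
  obtain ⟨n, π, hπ⟩ := Module.Finite.exists_fin' A P
  have hopen : IsOpenMap π :=
    ContinuousLinearMap.isOpenMap_of_norm_unit_lt_one ⟨π, π.continuous_on_pi⟩ hπ u hu
  have hquot : IsQuotientMap π := hopen.isQuotientMap π.continuous_on_pi hπ
  exact hquot.continuous_iff.2 (φ ∘ₗ π).continuous_on_pi

end OpenMapping

section NormBridge

variable {A : Type*} [Ring A] {v : A → ℝ}

def IsRingNorm.toRingNorm (hv : IsRingNorm v) : RingNorm A where
  toFun := v
  map_zero' := hv.map_zero
  add_le' a b := (hv.add_le a b).trans (max_le_add_of_nonneg (hv.nonneg a) (hv.nonneg b))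
  neg' := hv.map_neg
  mul_le' := hv.mul_le
  eq_zero_of_map_eq_zero' a := (hv.eq_zero_iff a).1

def IsModuleNorm.toAddGroupNorm {M : Type*} [AddCommGroup M] [Module A M] {nm : M → ℝ}
    (h : IsModuleNorm v nm) : AddGroupNorm M where
  toFun := nm
  map_zero' := (h.eq_zero_iff 0).2 rfl
  add_le' m n := (h.add_le m n).trans (max_le_add_of_nonneg (h.nonneg m) (h.nonneg n))
  neg' := h.map_neg
  eq_zero_of_map_eq_zero' m := (h.eq_zero_iff m).1

end NormBridge

theorem completeSpace_of_normComplete {E : Type*} [SeminormedAddCommGroup E]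
    (h : NormComplete (‖·‖ : E → ℝ)) : CompleteSpace E :=
  Metric.complete_of_cauchySeq_tendsto fun s hs => by
    obtain ⟨x, hx⟩ := h s fun ε hε => by
      obtain ⟨N, hN⟩ := Metric.cauchySeq_iff.1 hs ε hε
      exact ⟨N, fun i j hi hj => by simpa [dist_eq_norm] using hN i hi j hj⟩
    exact ⟨x, Metric.tendsto_atTop.2 fun ε hε => by simpa [dist_eq_norm] using hx ε hε⟩

theorem Continuous.normContinuous {E F : Type*} [SeminormedAddCommGroup E]
    [SeminormedAddCommGroup F] {f : E → F} (hf : Continuous f) :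
    NormContinuous (‖·‖) (‖·‖) f := fun m ε hε => by
  simpa [dist_eq_norm] using Metric.continuous_iff.1 hf m ε hε

theorem linearMap_from_finite_banach_continuous_general
    {A : Type u} [Ring A] (v : A → ℝ) (hA : IsBanachTate v)
    {M : Type v} [AddCommGroup M] [Module A M] (nmM : M → ℝ)
    (hM : IsModuleNorm v nmM)
    {P : Type w} [AddCommGroup P] [Module A P] (nmP : P → ℝ)
    (hP : IsModuleNorm v nmP) (hPc : NormComplete nmP)
    (hPfin : Module.Finite A P)
    (φ : P →ₗ[A] M) :
    NormContinuous nmP nmM φ := by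
  let : NormedRing A := hA.isRingNorm.toRingNorm.toNormedRing
  let : NormedAddCommGroup P := hP.toAddGroupNorm.toNormedAddCommGroup
  let : NormedAddCommGroup M := hM.toAddGroupNorm.toNormedAddCommGroup
  have : NormOneClass A := ⟨hA.isRingNorm.map_one⟩
  have : IsBoundedSMul A P := .of_norm_smul_le hP.smul_le
  have : IsBoundedSMul A M := .of_norm_smul_le hM.smul_le
  have : CompleteSpace A := completeSpace_of_normComplete hA.complete
  have : CompleteSpace P := completeSpace_of_normComplete hPc
  obtain ⟨ϖ, hϖ, hϖ_lt, -⟩ := hA.exists_unit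
  exact (φ.continuous_of_finite hϖ.unit hϖ_lt).normContinuous

/-- Over a Banach–Tate ring, every `A`-linear map from a finite
Banach `A`-module to a Banach `A`-module is automatically continuous. -/
theorem linearMap_from_finite_banach_continuous
    {A : Type u} [Ring A] (v : A → ℝ) (hA : IsBanachTate v)
    {M : Type v} [AddCommGroup M] [Module A M] (nmM : M → ℝ)
    (hM : IsModuleNorm v nmM) (hMc : NormComplete nmM)
    {P : Type w} [AddCommGroup P] [Module A P] (nmP : P → ℝ)
    (hP : IsModuleNorm v nmP) (hPc : NormComplete nmP)
    (hPfin : Module.Finite A P)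
    (φ : P →ₗ[A] M) :
    NormContinuous nmP nmM φ :=
  linearMap_from_finite_banach_continuous_general v hA nmM hM nmP hP hPc hPfin φ
end

section
/- Let A be a noetherian Banach–Tate ring. Then: (i) every finitely generated A-module admits a norm making it a Banach A-module, and any two such norms are equivalent (induce the same topology); (ii) for any finite Banach A-modules M and N, every A-linear map f:M→N is continuous, the image f(M) is closed in N, and the induced surjection M→f(M) is an open map. -/
/-!
Everything rests on the open mapping theorem for Banach modules over `A`, proved as for Banach
spaces: by Baire's theorem the closure of the image of some ball contains a ball, the
pseudo-uniformizer `ϖ` rescales this approximation to every scale, and the geometric series of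
successive corrections converges to an exact preimage.

Noetherianity enters through the closedness of every submodule `S` of a finite Banach module: the
closure `T` of `S` is finitely generated, say by `b`, and the open mapping theorem for
`c ↦ ∑ cᵢ bᵢ` shows that `c ↦ ∑ cᵢ xᵢ`, for `xᵢ ∈ S` close enough to `bᵢ`, approximates `T` near `0`
well enough to be onto a ball of `T`, whence `T = S`. A Banach norm on a finite module is then the
quotient norm of the sup norm under a surjection `Aⁿ → M`, complete because its kernel is closed;
uniqueness and continuity of linear maps follow from the open mapping theorem for `Aⁿ → M`.
-/

open scoped Classical

universe u v w

/-- Two norms on a module are equivalent if they induce the same topology, i.e. the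
identity map is continuous in both directions. -/
def NormEquiv {M : Type*} [AddCommGroup M] (nm nm' : M → ℝ) : Prop :=
  NormContinuous nm nm' id ∧ NormContinuous nm' nm id

/-- A subset is closed for the norm topology (sequential characterization, which is
equivalent for metric topologies). -/
def NormClosed {M : Type*} [AddCommGroup M] (nm : M → ℝ) (S : Set M) : Prop :=
  ∀ (s : ℕ → M) (x : M), (∀ n, s n ∈ S) → NormLim nm s x → x ∈ S

/-- A subset is open for the norm topology. -/
def NormOpenSet {M : Type*} [AddCommGroup M] (nm : M → ℝ) (S : Set M) : Prop :=
  ∀ x ∈ S, ∃ ε : ℝ, 0 < ε ∧ ∀ y, nm (y - x) < ε → y ∈ S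

/-- A subset `S` is open in the subspace `R` of `N` (for the norm topology). -/
def NormOpenIn {N : Type*} [AddCommGroup N] (nm : N → ℝ) (R S : Set N) : Prop :=
  ∀ x ∈ S, ∃ ε : ℝ, 0 < ε ∧ ∀ y ∈ R, nm (y - x) < ε → y ∈ S

open Filter Function

theorem exists_pow_mul_lt_of_lt_one {r C ε : ℝ} (hr0 : 0 ≤ r) (hr1 : r < 1) (hC : 0 ≤ C)
    (hε : 0 < ε) : ∃ t : ℕ, ∀ n ≥ t, r ^ n * C < ε := by
  obtain ⟨t, ht⟩ := exists_pow_lt_of_lt_one (show 0 < ε / (C + 1) by positivity) hr1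
  refine ⟨t, fun n hn => ?_⟩
  calc r ^ n * C ≤ r ^ t * (C + 1) :=
        mul_le_mul (pow_le_pow_of_le_one hr0 hr1.le hn) (by linarith) hC (by positivity)
    _ < ε / (C + 1) * (C + 1) := by gcongr
    _ = ε := div_mul_cancel₀ _ (by positivity)

noncomputable def supNorm {R ι : Type*} (v : R → ℝ) (c : ι → R) : ℝ :=
  ⨆ i, v (c i)

theorem supNorm_le {R ι : Type*} {v : R → ℝ} {c : ι → R} {r : ℝ} (hr : 0 ≤ r)
    (hc : ∀ i, v (c i) ≤ r) : supNorm v c ≤ r :=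
  Real.iSup_le hc hr

theorem le_supNorm {R ι : Type*} [Finite ι] (v : R → ℝ) (c : ι → R) (i : ι) :
    v (c i) ≤ supNorm v c :=
  le_ciSup (f := fun i => v (c i)) (Set.finite_range _).bddAbove i

variable {A : Type*} [Ring A] {v : A → ℝ}
variable {M : Type*} [AddCommGroup M] [Module A M] {nm : M → ℝ}
variable {N : Type*} [AddCommGroup N] [Module A N]

theorem normLim_of_le_geometric {s : ℕ → M} {x : M} {r C : ℝ} (hr0 : 0 ≤ r) (hr1 : r < 1)
    (hC : 0 ≤ C) (hs : ∀ n, nm (s n - x) ≤ r ^ n * C) : NormLim nm s x := by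
  intro ε hε
  obtain ⟨t, ht⟩ := exists_pow_mul_lt_of_lt_one hr0 hr1 hC hε
  exact ⟨t, fun n hn => (hs n).trans_lt (ht n hn)⟩

namespace IsModuleNorm

variable (h : IsModuleNorm v nm)
include h

theorem map_zero : nm 0 = 0 := (h.eq_zero_iff 0).mpr rfl

theorem map_sub_rev (x y : M) : nm (x - y) = nm (y - x) := by
  rw [← h.map_neg, neg_sub]

theorem sub_le_max (x y : M) : nm (x - y) ≤ max (nm x) (nm y) := by
  simpa [sub_eq_add_neg, h.map_neg] using h.add_le x (-y)

theorem dist_triangle_max (x y z : M) : nm (x - z) ≤ max (nm (x - y)) (nm (y - z)) := by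
  rw [← sub_add_sub_cancel x y z]
  exact h.add_le _ _

theorem sum_le {ι : Type*} (s : Finset ι) (f : ι → M) {r : ℝ} (hr : 0 ≤ r)
    (hf : ∀ i ∈ s, nm (f i) ≤ r) : nm (∑ i ∈ s, f i) ≤ r := by
  classical
  induction s using Finset.induction_on with
  | empty => simpa [h.map_zero] using hr
  | insert a s ha ih =>
    rw [Finset.sum_insert ha]
    exact (h.add_le _ _).trans (max_le (hf a (by simp)) (ih fun i hi => hf i (by simp [hi])))

theorem eq_zero_of_forall_lt {x : M} (hx : ∀ ε > 0, nm x < ε) : x = 0 :=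
  (h.eq_zero_iff x).mp (le_antisymm (le_of_forall_pos_lt_add fun ε hε => by simpa using hx ε hε)
    (h.nonneg x))

theorem normLim_unique {s : ℕ → M} {x y : M} (hx : NormLim nm s x) (hy : NormLim nm s y) :
    x = y := by
  refine sub_eq_zero.mp (h.eq_zero_of_forall_lt fun ε hε => ?_)
  obtain ⟨N₁, h₁⟩ := hx ε hε
  obtain ⟨N₂, h₂⟩ := hy ε hε
  have := h.dist_triangle_max x (s (max N₁ N₂)) y
  rw [h.map_sub_rev x (s _)] at this
  exact this.trans_lt (max_lt (h₁ _ (le_max_left _ _)) (h₂ _ (le_max_right _ _)))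

theorem le_of_normLim {s : ℕ → M} {x : M} (hs : NormLim nm s x) {r : ℝ}
    (hr : ∀ n, nm (s n) ≤ r) : nm x ≤ r := by
  have hr0 : 0 ≤ r := (h.nonneg _).trans (hr 0)
  refine le_of_forall_pos_lt_add fun ε hε => ?_
  obtain ⟨n, hn⟩ := hs ε hε
  have := h.dist_triangle_max x (s n) 0
  rw [sub_zero, sub_zero, h.map_sub_rev] at this
  exact this.trans_lt (max_lt_iff.mpr ⟨(hn n le_rfl).trans_le (by linarith),
    (hr n).trans_lt (by linarith)⟩)

theorem normLim_of_normCauchy_of_subseq {s : ℕ → M} (hs : NormCauchy nm s) {φ : ℕ → ℕ}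
    (hφ : StrictMono φ) {x : M} (hx : NormLim nm (s ∘ φ) x) : NormLim nm s x := by
  intro ε hε
  obtain ⟨N₁, h₁⟩ := hs ε hε
  obtain ⟨N₂, h₂⟩ := hx ε hε
  set K := max N₁ N₂
  refine ⟨K, fun i hi => (h.dist_triangle_max (s i) (s (φ K)) x).trans_lt (max_lt ?_ ?_)⟩
  · exact h₁ i (φ K) ((le_max_left _ _).trans hi) ((le_max_left _ _).trans (hφ.id_le K))
  · exact h₂ K (le_max_right _ _)

theorem exists_normLim_sum_of_le_geometric (hc : NormComplete nm) {u : ℕ → M} {r K : ℝ}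
    (hr0 : 0 ≤ r) (hr1 : r < 1) (hK : 0 ≤ K) (hu : ∀ t, nm (u t) ≤ r ^ t * K) :
    ∃ m, NormLim nm (fun T => ∑ t ∈ Finset.range T, u t) m ∧ nm m ≤ K := by
  have hu' : ∀ j t, j ≤ t → nm (u t) ≤ r ^ j * K := fun j t hjt =>
    (hu t).trans (mul_le_mul_of_nonneg_right (pow_le_pow_of_le_one hr0 hr1.le hjt) hK)
  have htail : ∀ i j, j ≤ i →
      nm (∑ t ∈ Finset.range i, u t - ∑ t ∈ Finset.range j, u t) ≤ r ^ j * K := by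
    intro i j hji
    rw [← Finset.sum_Ico_eq_sub _ hji]
    exact h.sum_le _ _ (by positivity) fun t ht => hu' j t (Finset.mem_Ico.mp ht).1
  obtain ⟨m, hm⟩ := hc _ fun ε hε => by
    obtain ⟨N, hN⟩ := exists_pow_mul_lt_of_lt_one hr0 hr1 hK hε
    refine ⟨N, fun i j hi hj => ?_⟩
    rcases le_total j i with hji | hij
    · exact (htail i j hji).trans_lt (hN j hj)
    · rw [h.map_sub_rev]
      exact (htail j i hij).trans_lt (hN i hi)
  refine ⟨m, hm, h.le_of_normLim hm fun T => ?_⟩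
  exact h.sum_le _ _ hK fun t _ => (hu' 0 t t.zero_le).trans (by simp)

end IsModuleNorm

theorem NormContinuous.normLim {nmN : N → ℝ} {f : M → N} (hf : NormContinuous nm nmN f)
    {s : ℕ → M} {x : M} (hs : NormLim nm s x) : NormLim nmN (fun n => f (s n)) (f x) := by
  intro ε hε
  obtain ⟨δ, hδ, hfδ⟩ := hf x ε hε
  obtain ⟨n, hn⟩ := hs δ hδ
  exact ⟨n, fun i hi => hfδ _ (hn i hi)⟩

theorem LinearMap.normContinuous_of_le {nmN : N → ℝ} (f : M →ₗ[A] N) {C : ℝ}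
    (hf : ∀ x, nmN (f x) ≤ C * nm x) (hnm : ∀ x, 0 ≤ nm x) : NormContinuous nm nmN f := by
  intro x ε hε
  refine ⟨ε / (|C| + 1), by positivity, fun x' hx' => ?_⟩
  rw [← map_sub]
  calc nmN (f (x' - x)) ≤ C * nm (x' - x) := hf _
    _ ≤ (|C| + 1) * nm (x' - x) :=
        mul_le_mul_of_nonneg_right (by linarith [le_abs_self C]) (hnm _)
    _ < (|C| + 1) * (ε / (|C| + 1)) := by gcongr
    _ = ε := mul_div_cancel₀ _ (by positivity)

def normClosure (nm : M → ℝ) (S : Set M) : Set M :=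
  {x | ∀ θ > 0, ∃ s ∈ S, nm (x - s) < θ}

section normClosure

variable (h : IsModuleNorm v nm)
include h

theorem subset_normClosure {S : Set M} : S ⊆ normClosure nm S :=
  fun x hx θ hθ => ⟨x, hx, by simpa [h.map_zero] using hθ⟩

theorem normClosed_normClosure (S : Set M) : NormClosed nm (normClosure nm S) := by
  intro s x hs hx θ hθ
  obtain ⟨n, hn⟩ := hx θ hθ
  obtain ⟨y, hyS, hy⟩ := hs n θ hθ
  refine ⟨y, hyS, (h.dist_triangle_max x (s n) y).trans_lt (max_lt ?_ hy)⟩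
  simpa [h.map_sub_rev x] using hn n le_rfl

def Submodule.normClosure (hv : IsRingNorm v) (S : Submodule A M) : Submodule A M where
  carrier := _root_.normClosure nm S
  zero_mem' := subset_normClosure h S.zero_mem
  add_mem' {x y} hx hy θ hθ := by
    obtain ⟨s, hs, hxs⟩ := hx θ hθ
    obtain ⟨t, ht, hyt⟩ := hy θ hθ
    refine ⟨s + t, S.add_mem hs ht, ?_⟩
    rw [add_sub_add_comm]
    exact (h.add_le _ _).trans_lt (max_lt hxs hyt)
  smul_mem' a x hx θ hθ := by
    obtain ⟨s, hs, hxs⟩ := hx (θ / (v a + 1)) (div_pos hθ (by linarith [hv.nonneg a]))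
    refine ⟨a • s, S.smul_mem a hs, ?_⟩
    rw [← smul_sub]
    calc nm (a • (x - s)) ≤ v a * nm (x - s) := h.smul_le _ _
      _ ≤ (v a + 1) * nm (x - s) := by linarith [h.nonneg (x - s)]
      _ < (v a + 1) * (θ / (v a + 1)) := by gcongr; linarith [hv.nonneg a]
      _ = θ := mul_div_cancel₀ _ (by linarith [hv.nonneg a])

end normClosure

abbrev IsModuleNorm.toNormedAddCommGroup (h : IsModuleNorm v nm) : NormedAddCommGroup M :=
  AddGroupNorm.toNormedAddCommGroup
    { toFun := nm
      map_zero' := h.map_zero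
      add_le' := fun x y => (h.add_le x y).trans (max_le_add_of_nonneg (h.nonneg x) (h.nonneg y))
      neg' := h.map_neg
      eq_zero_of_map_eq_zero' := fun x => (h.eq_zero_iff x).mp }

theorem IsModuleNorm.exists_ball_subset_normClosure (h : IsModuleNorm v nm)
    (hc : NormComplete nm) (D : ℕ → Set M) (hD : ∀ x, ∃ k, x ∈ D k) :
    ∃ (k : ℕ) (x : M), ∃ ρ > 0, ∀ y, nm (y - x) < ρ → y ∈ normClosure nm (D k) := by
  let _ := h.toNormedAddCommGroup
  have hdist : ∀ x y : M, dist x y = nm (x - y) := dist_eq_norm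
  have : CompleteSpace M := Metric.complete_of_cauchySeq_tendsto fun s hs => by
    obtain ⟨x, hx⟩ := hc s fun ε hε => by
      obtain ⟨n, hn⟩ := Metric.cauchySeq_iff.mp hs ε hε
      exact ⟨n, fun i j hi hj => hdist _ _ ▸ hn i hi j hj⟩
    exact ⟨x, Metric.tendsto_atTop.mpr fun ε hε => by simpa only [hdist] using hx ε hε⟩
  have : Nonempty M := ⟨0⟩
  obtain ⟨k, x, hx⟩ := nonempty_interior_of_iUnion_of_closed (fun k => isClosed_closure (s := D k))
    (Set.iUnion_eq_univ_iff.mpr fun x => (hD x).imp fun k hk => subset_closure hk)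
  obtain ⟨ρ, hρ, hball⟩ := Metric.isOpen_iff.mp isOpen_interior x hx
  refine ⟨k, x, ρ, hρ, fun y hy => ?_⟩
  show ∀ θ > 0, ∃ s ∈ D k, nm (y - s) < θ
  have hy : y ∈ closure (D k) := interior_subset (hball (by rwa [Metric.mem_ball, hdist]))
  simpa only [hdist] using Metric.mem_closure_iff.mp hy

theorem IsModuleNorm.submodule (h : IsModuleNorm v nm) (S : Submodule A M) :
    IsModuleNorm v (fun x : S => nm x) :=
  ⟨fun x => h.nonneg x, fun x => (h.eq_zero_iff x).trans (by simp), fun x => h.map_neg x,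
    fun x y => h.add_le x y, fun a x => h.smul_le a x⟩

theorem NormComplete.submodule (hc : NormComplete nm) {S : Submodule A M}
    (hS : NormClosed nm S) : NormComplete (fun x : S => nm x) := by
  intro s hs
  obtain ⟨x, hx⟩ := hc (fun n => s n) hs
  exact ⟨⟨x, hS _ x (fun n => (s n).2) hx⟩, hx⟩

def IsPseudoUniformizer (v : A → ℝ) (ϖ : A) : Prop :=
  IsUnit ϖ ∧ v ϖ < 1 ∧ ∀ b, v (ϖ * b) = v ϖ * v b

theorem IsBanachTate.exists_isPseudoUniformizer (hA : IsBanachTate v) :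
    ∃ ϖ, IsPseudoUniformizer v ϖ :=
  hA.exists_unit

namespace IsPseudoUniformizer

variable {ϖ : A} (hϖ : IsPseudoUniformizer v ϖ) (hv : IsRingNorm v)
include hϖ hv

theorem mul_norm_inv : v ϖ * v ↑hϖ.1.unit⁻¹ = 1 := by
  rw [← hϖ.2.2, hϖ.1.mul_val_inv, hv.map_one]

theorem norm_pos : 0 < v ϖ :=
  (hv.nonneg ϖ).lt_of_ne fun h0 => by simpa [← h0] using hϖ.mul_norm_inv hv

theorem norm_smul (h : IsModuleNorm v nm) (x : M) : nm (ϖ • x) = v ϖ * nm x := by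
  refine le_antisymm (h.smul_le ϖ x) ?_
  calc v ϖ * nm x = v ϖ * nm ((↑hϖ.1.unit⁻¹ : A) • ϖ • x) := by
        rw [smul_smul, hϖ.1.val_inv_mul, one_smul]
    _ ≤ v ϖ * (v ↑hϖ.1.unit⁻¹ * nm (ϖ • x)) :=
        mul_le_mul_of_nonneg_left (h.smul_le _ _) (hv.nonneg ϖ)
    _ = nm (ϖ • x) := by rw [← mul_assoc, hϖ.mul_norm_inv hv, one_mul]

theorem norm_pow_smul (h : IsModuleNorm v nm) (t : ℕ) (x : M) :
    nm (ϖ ^ t • x) = v ϖ ^ t * nm x := by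
  induction t with
  | zero => simp
  | succ t ih => rw [pow_succ', mul_smul, hϖ.norm_smul hv h, ih, pow_succ', mul_assoc]

end IsPseudoUniformizer

theorem IsPseudoUniformizer.le_of_forall_norm_lt_mem {ϖ : A} (hϖ : IsPseudoUniformizer v ϖ)
    (hv : IsRingNorm v) (h : IsModuleNorm v nm) {S T : Submodule A M} {δ : ℝ} (hδ : 0 < δ)
    (hTS : ∀ y ∈ T, nm y < δ → y ∈ S) : T ≤ S := by
  intro y hy
  obtain ⟨t, ht⟩ := exists_pow_mul_lt_of_lt_one (hϖ.norm_pos hv).le hϖ.2.1 (h.nonneg y) hδ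
  refine (S.smul_mem_iff_of_isUnit (hϖ.1.pow t)).mp (hTS _ (T.smul_mem _ hy) ?_)
  exact (hϖ.norm_pow_smul hv h t y).trans_lt (ht t le_rfl)

theorem IsPseudoUniformizer.exists_pow_smul_eq {ϖ : A} (hϖ : IsPseudoUniformizer v ϖ) (t : ℕ)
    (y : M) : ∃ x, ϖ ^ t • x = y := by
  obtain ⟨η, hη⟩ := (hϖ.1.pow t).exists_right_inv
  exact ⟨η • y, by rw [smul_smul, hη, one_smul]⟩

section supNorm

variable {ι : Type*} [Fintype ι]

theorem isModuleNorm_supNorm (hv : IsRingNorm v) : IsModuleNorm v (supNorm v : (ι → A) → ℝ) where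
  nonneg c := Real.iSup_nonneg fun i => hv.nonneg (c i)
  eq_zero_iff c := by
    refine ⟨fun h0 => funext fun i => (hv.eq_zero_iff _).mp
      (le_antisymm (h0 ▸ le_supNorm v c i) (hv.nonneg _)), ?_⟩
    rintro rfl
    exact le_antisymm (supNorm_le le_rfl fun i => by simp [hv.map_zero])
      (Real.iSup_nonneg fun i => hv.nonneg _)
  map_neg c := by simp only [supNorm, Pi.neg_apply, hv.map_neg]
  add_le c d := supNorm_le ((Real.iSup_nonneg fun i => hv.nonneg (c i)).trans (le_max_left _ _))
    fun i => (hv.add_le _ _).trans (max_le_max (le_supNorm v c i) (le_supNorm v d i))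
  smul_le a c := supNorm_le
    (mul_nonneg (hv.nonneg a) (Real.iSup_nonneg fun i => hv.nonneg (c i)))
    fun i => (hv.mul_le _ _).trans (mul_le_mul_of_nonneg_left (le_supNorm v c i) (hv.nonneg a))

theorem normComplete_supNorm (hc : NormComplete v) :
    NormComplete (supNorm v : (ι → A) → ℝ) := by
  intro s hs
  have hcoord : ∀ i, ∃ x, NormLim v (fun n => s n i) x := fun i => hc _ fun ε hε => by
    obtain ⟨n, hn⟩ := hs ε hε
    exact ⟨n, fun j k hj hk => (le_supNorm v (s j - s k) i).trans_lt (hn j k hj hk)⟩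
  choose x hx using hcoord
  refine ⟨x, fun ε hε => ?_⟩
  choose n hn using fun i => hx i (ε / 2) (half_pos hε)
  refine ⟨Finset.univ.sup n, fun j hj => (supNorm_le (half_pos hε).le fun i => ?_).trans_lt
    (half_lt_self hε)⟩
  exact (hn i j ((Finset.le_sup (Finset.mem_univ i)).trans hj)).le

variable (hv : IsRingNorm v) (h : IsModuleNorm v nm)
include hv h

theorem norm_linearCombination_le (b : ι → M) {B : ℝ} (hB : 0 ≤ B) (hb : ∀ i, nm (b i) ≤ B)
    (c : ι → A) : nm (Fintype.linearCombination A b c) ≤ B * supNorm v c :=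
  h.sum_le _ _ (mul_nonneg hB ((isModuleNorm_supNorm hv).nonneg c)) fun i _ =>
    (h.smul_le _ _).trans (by
      rw [mul_comm B]
      exact mul_le_mul (le_supNorm v c i) (hb i) (h.nonneg _) ((isModuleNorm_supNorm hv).nonneg c))

theorem normContinuous_linearCombination (b : ι → M) :
    NormContinuous (supNorm v) nm (Fintype.linearCombination A b) :=
  LinearMap.normContinuous_of_le _
    (norm_linearCombination_le hv h b (Real.iSup_nonneg fun i => h.nonneg (b i))
      (le_supNorm nm b))
    (isModuleNorm_supNorm hv).nonneg

end supNorm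

/-- For additive `f` this is openness of `f`. -/
def NormOpenMap (nmM : M → ℝ) (nmN : N → ℝ) (f : M → N) : Prop :=
  ∀ ε > 0, ∃ δ > 0, ∀ y, nmN y < δ → ∃ x, nmM x < ε ∧ f x = y

section OpenMapping

variable {nmN : N → ℝ} (hM : IsModuleNorm v nm) (hN : IsModuleNorm v nmN)

include hM hN in
/-- The successive corrections `uₜ` form a geometrically decaying series whose sum is a
preimage. -/
theorem exists_preimage_of_forall_approx (hMc : NormComplete nm) (f : M →ₗ[A] N)
    (hf : NormContinuous nm nmN f) {r ρ K : ℝ} (hr0 : 0 ≤ r) (hr1 : r < 1) (hK : 0 ≤ K)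
    (happrox : ∀ (t : ℕ) (w : N), nmN w < ρ * r ^ t →
      ∃ u, nm u ≤ r ^ t * K ∧ nmN (w - f u) < ρ * r ^ (t + 1))
    {w : N} (hw : nmN w < ρ) : ∃ m, nm m ≤ K ∧ f m = w := by
  have happrox' : ∀ (t : ℕ) (w : N), ∃ u, nmN w < ρ * r ^ t →
      nm u ≤ r ^ t * K ∧ nmN (w - f u) < ρ * r ^ (t + 1) := fun t w => by
    by_cases hw : nmN w < ρ * r ^ t
    · exact (happrox t w hw).imp fun u hu _ => hu
    · exact ⟨0, fun hw' => absurd hw' hw⟩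
  choose U hU using happrox'
  let g : ℕ → N := fun n => Nat.rec w (fun t gt => gt - f (U t gt)) n
  have hg : ∀ t, nmN (g t) < ρ * r ^ t := by
    intro t
    induction t with
    | zero => simpa [g] using hw
    | succ t ih => exact (hU t (g t) ih).2
  have hfS : ∀ T, f (∑ t ∈ Finset.range T, U t (g t)) = w - g T := by
    intro T
    induction T with
    | zero => simp [g]
    | succ T ih =>
      rw [Finset.sum_range_succ, map_add, ih]
      change _ = w - (g T - f (U T (g T)))
      abel
  obtain ⟨m, hm, hmK⟩ :=
    hM.exists_normLim_sum_of_le_geometric hMc hr0 hr1 hK fun t => (hU t (g t) (hg t)).1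
  refine ⟨m, hmK, hN.normLim_unique (hf.normLim hm) ?_⟩
  simp_rw [hfS]
  have hρ : 0 ≤ ρ := (hN.nonneg w).trans hw.le
  refine normLim_of_le_geometric hr0 hr1 hρ fun T => ?_
  rw [sub_sub_cancel_left, hN.map_neg, mul_comm]
  exact (hg T).le

namespace IsPseudoUniformizer

variable {ϖ : A} (hϖ : IsPseudoUniformizer v ϖ) (hv : IsRingNorm v)
include hϖ hv hM hN

/-- Rescaling by powers of `ϖ` turns an approximation on the ball of radius `ρ` into one on every
ball of radius `ρ · (v ϖ)ᵗ`. -/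
theorem exists_preimage_of_approx (hMc : NormComplete nm) (f : M →ₗ[A] N)
    (hf : NormContinuous nm nmN f) {ρ K : ℝ} (hK : 0 ≤ K)
    (happrox : ∀ w, nmN w < ρ → ∃ u, nm u ≤ K ∧ nmN (w - f u) < ρ * v ϖ)
    {w : N} (hw : nmN w < ρ) : ∃ m, nm m ≤ K ∧ f m = w := by
  have hq := hϖ.norm_pos hv
  refine exists_preimage_of_forall_approx hM hN hMc f hf hq.le hϖ.2.1 hK (fun t w hw => ?_) hw
  obtain ⟨w, rfl⟩ := hϖ.exists_pow_smul_eq t w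
  rw [hϖ.norm_pow_smul hv hN, mul_comm ρ] at hw
  obtain ⟨u, hu, hwu⟩ := happrox w (lt_of_mul_lt_mul_left hw (by positivity))
  refine ⟨ϖ ^ t • u, ?_, ?_⟩
  · rw [hϖ.norm_pow_smul hv hM]
    exact mul_le_mul_of_nonneg_left hu (by positivity)
  · rw [map_smul, ← smul_sub, hϖ.norm_pow_smul hv hN, pow_succ, ← mul_assoc, mul_comm ρ,
      mul_assoc]
    exact mul_lt_mul_of_pos_left hwu (by positivity)

theorem normOpenMap_of_ball_subset_image (f : M →ₗ[A] N) {ρ K : ℝ} (hρ : 0 < ρ)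
    (hball : ∀ w, nmN w < ρ → ∃ m, nm m ≤ K ∧ f m = w) : NormOpenMap nm nmN f := by
  have hq := hϖ.norm_pos hv
  obtain ⟨m₀, hm₀, -⟩ := hball 0 (by rwa [hN.map_zero])
  intro ε hε
  obtain ⟨t, ht⟩ := exists_pow_mul_lt_of_lt_one hq.le hϖ.2.1 ((hM.nonneg m₀).trans hm₀) hε
  refine ⟨ρ * v ϖ ^ t, by positivity, fun y hy => ?_⟩
  obtain ⟨y, rfl⟩ := hϖ.exists_pow_smul_eq t y
  rw [hϖ.norm_pow_smul hv hN, mul_comm ρ] at hy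
  obtain ⟨m, hm, rfl⟩ := hball y (lt_of_mul_lt_mul_left hy (by positivity))
  refine ⟨ϖ ^ t • m, ?_, map_smul f _ _⟩
  rw [hϖ.norm_pow_smul hv hM]
  exact (mul_le_mul_of_nonneg_left hm (by positivity)).trans_lt (ht t le_rfl)

end IsPseudoUniformizer

include hM hN in
theorem normOpenMap_of_surjective (hA : IsBanachTate v) (hMc : NormComplete nm)
    (hNc : NormComplete nmN) (f : M →ₗ[A] N) (hfs : Surjective f)
    (hf : NormContinuous nm nmN f) : NormOpenMap nm nmN f := by
  have hv := hA.isRingNorm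
  obtain ⟨ϖ, hϖ⟩ := hA.exists_isPseudoUniformizer
  obtain ⟨k, x₀, ρ, hρ, hdense⟩ := hN.exists_ball_subset_normClosure hNc
    (fun k : ℕ => f '' {m | nm m ≤ k}) fun y => by
      obtain ⟨m, rfl⟩ := hfs y
      exact (exists_nat_ge (nm m)).imp fun k hk => ⟨m, hk, rfl⟩
  have hρq : 0 < ρ * v ϖ := mul_pos hρ (hϖ.norm_pos hv)
  -- Approximating `x₀ + w` and `x₀` and subtracting moves the ball to `0` at no cost in radius.
  have happrox : ∀ w, nmN w < ρ → ∃ u, nm u ≤ k ∧ nmN (w - f u) < ρ * v ϖ := by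
    intro w hw
    obtain ⟨_, ⟨u₁, hu₁, rfl⟩, h₁⟩ := hdense (x₀ + w) (by simpa using hw) _ hρq
    obtain ⟨_, ⟨u₂, hu₂, rfl⟩, h₂⟩ := hdense x₀ (by simpa [hN.map_zero] using hρ) _ hρq
    refine ⟨u₁ - u₂, (hM.sub_le_max _ _).trans (max_le hu₁ hu₂), ?_⟩
    have : w - f (u₁ - u₂) = (x₀ + w - f u₁) - (x₀ - f u₂) := by rw [map_sub]; abel
    rw [this]
    exact (hN.sub_le_max _ _).trans_lt (max_lt h₁ h₂)
  exact hϖ.normOpenMap_of_ball_subset_image hM hN hv f hρ fun w hw =>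
    hϖ.exists_preimage_of_approx hM hN hv hMc f hf k.cast_nonneg happrox hw

end OpenMapping

theorem Submodule.normClosed (hA : IsBanachTate v) [IsNoetherianRing A] [Module.Finite A M]
    (hM : IsModuleNorm v nm) (hMc : NormComplete nm) (S : Submodule A M) :
    NormClosed nm S := by
  have hv := hA.isRingNorm
  obtain ⟨ϖ, hϖ⟩ := hA.exists_isPseudoUniformizer
  have hq := hϖ.norm_pos hv
  let T := S.normClosure hM hv
  have hTclosed : NormClosed nm T := normClosed_normClosure hM S
  have hT := hM.submodule T
  have hTc := hMc.submodule hTclosed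
  have : IsNoetherian A M := isNoetherian_of_isNoetherianRing_of_finite A M
  obtain ⟨r, b, hb⟩ := Module.Finite.exists_fin (R := A) (M := T)
  have hAr := isModuleNorm_supNorm (ι := Fin r) hv
  have hArc := normComplete_supNorm (ι := Fin r) hA.complete
  obtain ⟨δ, hδ, hlift⟩ := normOpenMap_of_surjective hAr hT hA hArc hTc _
    ((span_range_eq_top_iff_surjective_fintypeLinearCombination A b).mp hb)
    (normContinuous_linearCombination hv hT b) 1 one_pos
  choose x hxS hxb using fun i => (b i).2 (δ * v ϖ / 2) (by positivity)
  let g := Fintype.linearCombination A fun i => (⟨x i, subset_normClosure hM (hxS i)⟩ : T)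
  have hgS : ∀ c, (g c : M) ∈ S := fun c => by
    simpa [g, Fintype.linearCombination_apply] using
      S.sum_mem fun i _ => S.smul_mem (c i) (hxS i)
  have happrox : ∀ w : T, nm w < δ → ∃ c, supNorm v c ≤ 1 ∧ nm ↑(w - g c) < δ * v ϖ := by
    intro w hw
    obtain ⟨c, hc, rfl⟩ := hlift w hw
    refine ⟨c, hc.le, ?_⟩
    have hdiff : ((Fintype.linearCombination A b c - g c : T) : M) =
        Fintype.linearCombination A (fun i => (b i : M) - x i) c := by
      simp [g, Fintype.linearCombination_apply, smul_sub]
    rw [hdiff]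
    calc _ ≤ δ * v ϖ / 2 * supNorm v c :=
          norm_linearCombination_le hv hM _ (by positivity) (fun i => (hxb i).le) c
      _ ≤ δ * v ϖ / 2 * 1 := by gcongr
      _ < δ * v ϖ := by linarith [mul_pos hδ hq]
  have hTS : T ≤ S := hϖ.le_of_forall_norm_lt_mem hv hM hδ fun y hy hyδ => by
    obtain ⟨c, -, hc⟩ := hϖ.exists_preimage_of_approx hAr hT hv hArc g
      (normContinuous_linearCombination hv hT _) zero_le_one happrox (w := ⟨y, hy⟩) hyδ
    simpa only [hc] using hgS c
  intro s y hs hy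
  exact hTS (hTclosed s y (fun n => subset_normClosure hM (hs n)) hy)

section QuotientNorm

variable {P : Type*} [AddCommGroup P] [Module A P] {nmP : P → ℝ} {π : P →ₗ[A] M}

noncomputable def quotientNorm (nmP : P → ℝ) (π : P →ₗ[A] M) (m : M) : ℝ :=
  sInf (nmP '' {c | π c = m})

theorem quotientNorm_nonneg (hP : IsModuleNorm v nmP) (m : M) : 0 ≤ quotientNorm nmP π m :=
  Real.sInf_nonneg <| by rintro _ ⟨c, -, rfl⟩; exact hP.nonneg c

theorem quotientNorm_le (hP : IsModuleNorm v nmP) (c : P) : quotientNorm nmP π (π c) ≤ nmP c :=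
  csInf_le ⟨0, by rintro _ ⟨c, -, rfl⟩; exact hP.nonneg c⟩ ⟨c, rfl, rfl⟩

theorem exists_lift_lt_of_quotientNorm_lt (hπ : Surjective π) {m : M} {θ : ℝ}
    (h : quotientNorm nmP π m < θ) : ∃ c, π c = m ∧ nmP c < θ := by
  obtain ⟨c, rfl⟩ := hπ m
  obtain ⟨_, ⟨c', hc', rfl⟩, hlt⟩ :=
    exists_lt_of_csInf_lt (s := nmP '' {c' | π c' = π c}) ⟨_, c, rfl, rfl⟩ h
  exact ⟨c', hc', hlt⟩

variable (hP : IsModuleNorm v nmP) (hπ : Surjective π)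
include hP hπ

theorem quotientNorm_add_le (m₁ m₂ : M) :
    quotientNorm nmP π (m₁ + m₂) ≤ max (quotientNorm nmP π m₁) (quotientNorm nmP π m₂) := by
  refine le_of_forall_gt_imp_ge_of_dense fun θ hθ => ?_
  obtain ⟨c₁, rfl, h₁⟩ := exists_lift_lt_of_quotientNorm_lt hπ ((le_max_left _ _).trans_lt hθ)
  obtain ⟨c₂, rfl, h₂⟩ := exists_lift_lt_of_quotientNorm_lt hπ ((le_max_right _ _).trans_lt hθ)
  rw [← map_add]
  exact (quotientNorm_le hP _).trans ((hP.add_le _ _).trans (max_lt h₁ h₂).le)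

theorem quotientNorm_smul_le (hv : IsRingNorm v) (a : A) (m : M) :
    quotientNorm nmP π (a • m) ≤ v a * quotientNorm nmP π m := by
  rcases (hv.nonneg a).eq_or_lt with ha | ha
  · obtain ⟨c, rfl⟩ := hπ m
    calc quotientNorm nmP π (a • π c) ≤ nmP (a • c) := by
          rw [← map_smul]; exact quotientNorm_le hP _
      _ ≤ v a * nmP c := hP.smul_le _ _
      _ = v a * quotientNorm nmP π (π c) := by simp [← ha]
  refine le_of_forall_gt_imp_ge_of_dense fun θ hθ => ?_
  obtain ⟨c, rfl, hc⟩ := exists_lift_lt_of_quotientNorm_lt hπ ((lt_div_iff₀' ha).mpr hθ)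
  calc quotientNorm nmP π (a • π c) ≤ nmP (a • c) := by
        rw [← map_smul]; exact quotientNorm_le hP _
    _ ≤ v a * nmP c := hP.smul_le _ _
    _ ≤ v a * (θ / v a) := by gcongr
    _ = θ := mul_div_cancel₀ _ ha.ne'

theorem quotientNorm_eq_zero_iff (hker : NormClosed nmP (LinearMap.ker π)) (m : M) :
    quotientNorm nmP π m = 0 ↔ m = 0 := by
  refine ⟨fun h => ?_, ?_⟩
  · obtain ⟨c, rfl⟩ := hπ m
    choose c' hc' hc'lt using fun k : ℕ =>
      exists_lift_lt_of_quotientNorm_lt hπ (show quotientNorm nmP π (π c) < (1 / 2) ^ k by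
        rw [h]; positivity)
    have hlim : NormLim nmP (fun k => c - c' k) c := normLim_of_le_geometric (r := 1 / 2) (C := 1)
      (by norm_num) (by norm_num) zero_le_one fun k => by
        simpa [hP.map_neg] using (hc'lt k).le
    exact hker _ c (fun k => by simp [hc']) hlim
  · rintro rfl
    exact le_antisymm (by simpa [hP.map_zero] using quotientNorm_le hP (π := π) 0)
      (quotientNorm_nonneg hP 0)

theorem isModuleNorm_quotientNorm (hv : IsRingNorm v) (hker : NormClosed nmP (LinearMap.ker π)) :
    IsModuleNorm v (quotientNorm nmP π) := by
  have hneg : ∀ m, quotientNorm nmP π (-m) ≤ quotientNorm nmP π m := fun m => by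
    simpa [hv.map_neg, hv.map_one] using quotientNorm_smul_le hP hπ hv (-1) m
  exact ⟨quotientNorm_nonneg hP, quotientNorm_eq_zero_iff hP hπ hker,
    fun m => le_antisymm (hneg m) (by simpa using hneg (-m)), quotientNorm_add_le hP hπ,
    quotientNorm_smul_le hP hπ hv⟩

theorem normComplete_quotientNorm (hv : IsRingNorm v) (hPc : NormComplete nmP)
    (hker : NormClosed nmP (LinearMap.ker π)) : NormComplete (quotientNorm nmP π) := by
  intro s hs
  obtain ⟨φ, hφ, hφs⟩ := extraction_forall_of_eventually'
    (P := fun k n => ∀ j ≥ n, quotientNorm nmP π (s j - s n) < (1 / 2) ^ k) fun k => by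
      obtain ⟨n, hn⟩ := hs ((1 / 2) ^ k) (by positivity)
      exact ⟨n, fun i hi j hj => hn j i (hi.trans hj) hi⟩
  choose d hd hdlt using fun k =>
    exists_lift_lt_of_quotientNorm_lt hπ (hφs k (φ (k + 1)) (hφ (Nat.lt_succ_self k)).le)
  obtain ⟨D, hD, -⟩ := hP.exists_normLim_sum_of_le_geometric hPc (r := 1 / 2) (K := 1)
    (by norm_num) (by norm_num) zero_le_one fun k => by simpa using (hdlt k).le
  have hsum : ∀ T, π (∑ k ∈ Finset.range T, d k) = s (φ T) - s (φ 0) := by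
    intro T
    induction T with
    | zero => simp
    | succ T ih => rw [Finset.sum_range_succ, map_add, ih, hd]; abel
  have hq := isModuleNorm_quotientNorm hP hπ hv hker
  refine ⟨s (φ 0) + π D, hq.normLim_of_normCauchy_of_subseq hs hφ fun ε hε => ?_⟩
  obtain ⟨T, hT⟩ := hD ε hε
  refine ⟨T, fun n hn => ?_⟩
  have : s (φ n) - (s (φ 0) + π D) = π (∑ k ∈ Finset.range n, d k - D) := by
    rw [map_sub, hsum]; abel
  rw [Function.comp_apply, this]
  exact (quotientNorm_le hP _).trans_lt (hT n hn)

end QuotientNorm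

theorem exists_isModuleNorm_normComplete (hA : IsBanachTate v) [IsNoetherianRing A]
    [Module.Finite A M] : ∃ nm : M → ℝ, IsModuleNorm v nm ∧ NormComplete nm := by
  have hv := hA.isRingNorm
  obtain ⟨n, b, hb⟩ := Module.Finite.exists_fin (R := A) (M := M)
  have hπ := (span_range_eq_top_iff_surjective_fintypeLinearCombination A b).mp hb
  have hP := isModuleNorm_supNorm (ι := Fin n) hv
  have hPc := normComplete_supNorm (ι := Fin n) hA.complete
  have hker := (LinearMap.ker (Fintype.linearCombination A b)).normClosed hA hP hPc
  exact ⟨_, isModuleNorm_quotientNorm hP hπ hv hker, normComplete_quotientNorm hP hπ hv hPc hker⟩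

section Maps

variable {nmN : N → ℝ}

theorem LinearMap.normContinuous_of_comp {P : Type*} [AddCommGroup P] [Module A P]
    {nmP : P → ℝ} (g : P →ₗ[A] M) (hg : NormOpenMap nmP nm g) (f : M →ₗ[A] N)
    (hfg : NormContinuous nmP nmN (f ∘ₗ g)) : NormContinuous nm nmN f := by
  intro m ε hε
  obtain ⟨δ₁, hδ₁, h₁⟩ := hfg 0 ε hε
  obtain ⟨δ, hδ, h₂⟩ := hg δ₁ hδ₁
  refine ⟨δ, hδ, fun m' hm' => ?_⟩
  obtain ⟨c, hc, hgc⟩ := h₂ (m' - m) hm'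
  simpa [hgc] using h₁ c (by simpa using hc)

theorem LinearMap.normContinuous (hA : IsBanachTate v) [Module.Finite A M]
    (hM : IsModuleNorm v nm) (hMc : NormComplete nm) (hN : IsModuleNorm v nmN)
    (f : M →ₗ[A] N) : NormContinuous nm nmN f := by
  have hv := hA.isRingNorm
  obtain ⟨n, b, hb⟩ := Module.Finite.exists_fin (R := A) (M := M)
  have hπ := normOpenMap_of_surjective (isModuleNorm_supNorm (ι := Fin n) hv) hM hA
    (normComplete_supNorm hA.complete) hMc _
    ((span_range_eq_top_iff_surjective_fintypeLinearCombination A b).mp hb)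
    (normContinuous_linearCombination hv hM b)
  refine (Fintype.linearCombination A b).normContinuous_of_comp hπ f ?_
  have : f ∘ₗ Fintype.linearCombination A b = Fintype.linearCombination A (f ∘ b) := by
    ext c
    simp [Fintype.linearCombination_apply]
  rw [this]
  exact normContinuous_linearCombination hv hN _

theorem LinearMap.normOpenIn_image (f : M →ₗ[A] N)
    (hf : NormOpenMap nm (fun y : LinearMap.range f => nmN y) f.rangeRestrict) {U : Set M}
    (hU : NormOpenSet nm U) : NormOpenIn nmN (LinearMap.range f) (f '' U) := by
  rintro _ ⟨u, huU, rfl⟩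
  obtain ⟨ε, hε, hεU⟩ := hU u huU
  obtain ⟨δ, hδ, hlift⟩ := hf ε hε
  refine ⟨δ, hδ, fun y hy hyu => ?_⟩
  obtain ⟨m, hm, hfm⟩ := hlift ⟨y - f u, sub_mem hy (LinearMap.mem_range_self f u)⟩ hyu
  refine ⟨u + m, hεU _ (by simpa using hm), ?_⟩
  have hfm : f m = y - f u := congrArg Subtype.val hfm
  rw [map_add, hfm, add_sub_cancel]

end Maps

/-- Over a noetherian Banach–Tate ring: (i) every finitely generated
module has a Banach module norm, unique up to equivalence; (ii) any linear map of
finite Banach modules is continuous, has closed image, and the induced surjection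
onto its image is open. -/
theorem finite_module_banach_norm_unique_and_maps
    {A : Type u} [Ring A] (v : A → ℝ) (hA : IsBanachTate v)
    (hnoeth : IsNoetherianRing A) :
    (∀ (M : Type u) [AddCommGroup M] [Module A M], Module.Finite A M →
      (∃ nm : M → ℝ, IsModuleNorm v nm ∧ NormComplete nm) ∧
      (∀ nm nm' : M → ℝ, IsModuleNorm v nm → NormComplete nm →
        IsModuleNorm v nm' → NormComplete nm' → NormEquiv nm nm')) ∧
    (∀ (M : Type u) [AddCommGroup M] [Module A M], Module.Finite A M →
     ∀ (N : Type u) [AddCommGroup N] [Module A N], Module.Finite A N →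
     ∀ (nmM : M → ℝ), IsModuleNorm v nmM → NormComplete nmM →
     ∀ (nmN : N → ℝ), IsModuleNorm v nmN → NormComplete nmN →
     ∀ f : M →ₗ[A] N,
       NormContinuous nmM nmN f ∧
       NormClosed nmN (LinearMap.range f : Set N) ∧
       (∀ U : Set M, NormOpenSet nmM U →
         NormOpenIn nmN (LinearMap.range f : Set N) (f '' U))) := by
  refine ⟨fun M _ _ _ => ⟨exists_isModuleNorm_normComplete hA, fun nm nm' h hc h' hc' =>
    ⟨LinearMap.id.normContinuous hA h hc h', LinearMap.id.normContinuous hA h' hc' h⟩⟩,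
    fun M _ _ _ N _ _ _ nmM hM hMc nmN hN hNc f => ?_⟩
  have hclosed := (LinearMap.range f).normClosed hA hN hNc
  have hopen := normOpenMap_of_surjective hM (hN.submodule _) hA hMc (hNc.submodule hclosed)
    f.rangeRestrict f.surjective_rangeRestrict (f.normContinuous hA hM hMc hN)
  exact ⟨f.normContinuous hA hM hMc hN, hclosed, fun U hU => f.normOpenIn_image hopen hU⟩
end

section
/- Let A be a noetherian Banach–Tate ring and M an ONable Banach A-module with ON basis (e_i)_{i∈I}. If (φ_n)_{n≥1} is a sequence of compact operators on M converging in the operator norm to a compact operator φ, then the characteristic power series converge uniformly in the coefficients: writing det(1−Xφ)=Σ_m c_mX^m and det(1−Xφ_n)=Σ_m c_m^{(n)}X^m, for every ε>0 there is N such that for all n≥N and all m≥0 one has |c_m−c_m^{(n)}|≤ε. -/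
open scoped Classical

universe u v w

/-- `cA v hv I` is the Banach `A`-module `c_A(I)` of functions `I → A` tending to zero:
for every `ε > 0` only finitely many `i` satisfy `v (f i) > ε`. -/
def cA {A : Type u} [Ring A] (v : A → ℝ) (hv : IsRingNorm v) (I : Type v) :
    Submodule A (I → A) where
  carrier := {f | ∀ ε : ℝ, 0 < ε → {i : I | ε < v (f i)}.Finite}
  add_mem' := by
    intro f g hf hg ε hε
    refine ((hf ε hε).union (hg ε hε)).subset ?_
    intro i hi
    simp only [Set.mem_setOf_eq, Pi.add_apply] at hi
    simp only [Set.mem_union, Set.mem_setOf_eq]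
    by_contra hc
    push_neg at hc
    have h := le_trans (hv.add_le (f i) (g i)) (max_le hc.1 hc.2)
    exact absurd hi (not_lt.mpr h)
  zero_mem' := by
    intro ε hε
    have : {i : I | ε < v ((0 : I → A) i)} = ∅ := by
      ext i
      simp only [Set.mem_setOf_eq, Pi.zero_apply, Set.mem_empty_iff_false, iff_false, not_lt,
        hv.map_zero]
      exact le_of_lt hε
    rw [this]; exact Set.finite_empty
  smul_mem' := by
    intro a f hf ε hε
    rcases eq_or_ne a 0 with rfl | ha
    · refine Set.finite_empty.subset ?_
      intro i hi
      simp only [Set.mem_setOf_eq, Pi.smul_apply, zero_smul, hv.map_zero] at hi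
      exact absurd hi (not_lt.mpr (le_of_lt hε))
    · have hva : 0 < v a := by
        rcases lt_or_eq_of_le (hv.nonneg a) with h | h
        · exact h
        · exact absurd ((hv.eq_zero_iff a).mp h.symm) ha
      refine (hf (ε / v a) (div_pos hε hva)).subset ?_
      intro i hi
      simp only [Set.mem_setOf_eq, Pi.smul_apply, smul_eq_mul] at hi
      simp only [Set.mem_setOf_eq]
      rw [div_lt_iff₀ hva]
      calc ε < v (a * f i) := hi
        _ ≤ v a * v (f i) := hv.mul_le a (f i)
        _ = v (f i) * v a := mul_comm _ _

/-- The norm on `c_A(I)`: the supremum (= maximum) of the norms of the values. -/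
noncomputable def cNorm {A : Type u} [Ring A] (v : A → ℝ) {hv : IsRingNorm v} {I : Type v}
    (f : cA v hv I) : ℝ :=
  ⨆ i : I, v ((f : I → A) i)

/-- The canonical `i`-th basis vector `e_i` of `c_A(I)`. -/
noncomputable def stdDelta {A : Type u} [Ring A] (v : A → ℝ) (hv : IsRingNorm v) {I : Type v} (i : I) :
    cA v hv I :=
  ⟨fun j => if j = i then 1 else 0, by
    intro ε hε
    refine (Set.finite_singleton i).subset ?_
    intro j hj
    simp only [Set.mem_setOf_eq] at hj
    simp only [Set.mem_singleton_iff]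
    by_contra hji
    rw [if_neg hji, hv.map_zero] at hj
    exact absurd hj (not_lt.mpr (le_of_lt hε))⟩
/-- A linear map has finite rank if its image is contained in a finitely generated
submodule of the target. -/
def FiniteRank {A : Type u} [Ring A] {M : Type v} {N : Type w} [AddCommGroup M] [Module A M]
    [AddCommGroup N] [Module A N] (f : M →ₗ[A] N) : Prop :=
  ∃ P : Submodule A N, P.FG ∧ LinearMap.range f ≤ P

/-- A continuous linear map is compact if it is a limit, in the operator norm, of
continuous finite rank maps. -/
def IsCompactOp {A : Type u} [Ring A] {M : Type v} {N : Type w} [AddCommGroup M] [Module A M]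
    [AddCommGroup N] [Module A N] (nmM : M → ℝ) (nmN : N → ℝ) (f : M →ₗ[A] N) : Prop :=
  NormContinuous nmM nmN f ∧
  ∀ ε : ℝ, 0 < ε → ∃ g : M →ₗ[A] N, NormContinuous nmM nmN g ∧ FiniteRank g ∧
    ∀ m : M, nmN (f m - g m) ≤ ε * nmM m

/-- The matrix coefficients `a_{i,j}` of a linear map `f : M → N`, with respect to
ON bases of `M` and `N` given by isomorphisms with `c_A(I)` and `c_A(J)`:
`f(e_i) = Σ_j a_{i,j} f_j`. -/
noncomputable def matrixCoef {A : Type u} [Ring A] (v : A → ℝ) (hv : IsRingNorm v)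
    {I : Type v} {J : Type v} {M N : Type v} [AddCommGroup M] [Module A M]
    [AddCommGroup N] [Module A N]
    (TM : M ≃ₗ[A] cA v hv I) (TN : N ≃ₗ[A] cA v hv J)
    (f : M →ₗ[A] N) (i : I) (j : J) : A :=
  ((TN (f (TM.symm (stdDelta v hv i))) : cA v hv J) : J → A) j

/-- The projection of `c_A(I)` onto the coordinates in a finite set `S`. -/
noncomputable def projCA {A : Type u} [Ring A] (v : A → ℝ) (hv : IsRingNorm v) {I : Type v}
    (S : Finset I) : cA v hv I →ₗ[A] cA v hv I where
  toFun f := ⟨fun i => if i ∈ S then (f : I → A) i else 0, by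
    intro ε hε
    refine (f.2 ε hε).subset ?_
    intro i hi
    simp only [Set.mem_setOf_eq] at hi ⊢
    by_cases h : i ∈ S
    · rwa [if_pos h] at hi
    · rw [if_neg h, hv.map_zero] at hi
      exact absurd hi (not_lt.mpr (le_of_lt hε))⟩
  map_add' f g := by
    apply Subtype.ext
    funext i
    by_cases h : i ∈ S <;> simp [h]
  map_smul' a f := by
    apply Subtype.ext
    funext i
    by_cases h : i ∈ S <;> simp [h]

/-- The projection `π_S : M → M` of an ONable Banach module onto the span of the
basis vectors indexed by a finite set `S`. -/
noncomputable def projON {A : Type u} [Ring A] (v : A → ℝ) (hv : IsRingNorm v)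
    {I : Type v} {M : Type v} [AddCommGroup M] [Module A M]
    (T : M ≃ₗ[A] cA v hv I) (S : Finset I) : M →ₗ[A] M :=
  T.symm.toLinearMap ∘ₗ projCA v hv S ∘ₗ T.toLinearMap
/-- Unconditional summability of a family in `A` with respect to the norm `v`:
the finite partial sums converge to `x` along the filter of finite subsets. -/
def HasNormSum {A : Type u} [Ring A] (v : A → ℝ) {ι : Type*} (g : ι → A) (x : A) : Prop :=
  ∀ ε : ℝ, 0 < ε → ∃ s : Finset ι, ∀ t : Finset ι, s ⊆ t → v ((∑ i ∈ t, g i) - x) < ε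

/-- For a matrix `(a_{i,j})_{i,j ∈ I}` and a finite subset `S ⊆ I`, the sum
`c_S = Σ_{σ : S → S} sgn(σ) Π_{i ∈ S} a_{i,σ(i)}` over all permutations of `S`. -/
noncomputable def detSubset {A : Type u} [CommRing A] {I : Type v} (a : I → I → A)
    (S : Finset I) : A :=
  ∑ σ : Equiv.Perm {x : I // x ∈ S},
    ((Equiv.Perm.sign σ : ℤ) : A) * ∏ i : {x : I // x ∈ S}, a i.1 (σ i).1

/-- `c : ℕ → A` is the sequence of coefficients of the characteristic power series
`det(1 - Xφ) = Σ_n c_n X^n` of an operator with matrix `(a_{i,j})`: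
`c_n = (-1)^n Σ_{S ⊆ I, |S| = n} c_S`, the sum converging with respect to `v`. -/
noncomputable def IsCharSeries {A : Type u} [CommRing A] (v : A → ℝ) {I : Type v}
    (a : I → I → A) (c : ℕ → A) : Prop :=
  ∀ n : ℕ, HasNormSum v
    (fun S : {S : Finset I // S.card = n} => (-1 : A) ^ n * detSubset a S.1) (c n)

/-! The matrix of `φ` is, up to entries of size `≤ η < 1`, the matrix `β * q` of a finite-rank
approximation, where `q` has `r` rows; the same holds for every `ψ` within `η` of `φ`. Expanding a
minor of `β * q + H` row by row, the terms taking more than `r` rows from `β * q` vanish, so each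
`m × m` minor, hence `c_m(ψ)`, is at most `η ^ (m - r) * C ^ r` with `C` a bound for the entries:
uniformly small once `m` is large. For the finitely many remaining `m`, the same expansion of
`(ψ - φ) + φ` gives `|c_m(ψ) - c_m(φ)| ≤ ‖ψ - φ‖ * C ^ (m - 1)`. -/

open Finset

theorem pow_add_mul_pow_le {x y : ℝ} (hx : 0 ≤ x) (hxy : x ≤ y) (a b k : ℕ) :
    x ^ (a + k) * y ^ b ≤ x ^ a * y ^ (b + k) := by
  have hy : 0 ≤ y := hx.trans hxy
  calc x ^ (a + k) * y ^ b = x ^ a * y ^ b * x ^ k := by ring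
    _ ≤ x ^ a * y ^ b * y ^ k := by gcongr
    _ = x ^ a * y ^ (b + k) := by ring

theorem Matrix.det_add_eq_sum_ite {n R : Type*} [Fintype n] [DecidableEq n] [CommRing R]
    (G H : Matrix n n R) :
    (G + H).det = ∑ T : Finset n, (Matrix.of fun i => if i ∈ T then G i else H i).det :=
  Matrix.detRowAlternating.map_add_univ G H

theorem AlternatingMap.map_eq_zero_of_card_lt_of_mem_span {R M N ι : Type*} [CommRing R]
    [AddCommGroup M] [Module R M] [AddCommGroup N] [Module R N] [Fintype ι] [DecidableEq ι]
    (f : M [⋀^ι]→ₗ[R] N) {m : ι → M} {T : Finset ι} {s : Finset M} (hs : #s < #T)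
    (hm : ∀ i ∈ T, m i ∈ Submodule.span R (s : Set M)) : f m = 0 := by
  have hcomb : ∀ i ∈ T, ∃ c : M → R, ∑ p ∈ s, c p • p = m i := fun i hi =>
    let ⟨c, _, hc⟩ := Submodule.mem_span_finset.mp (hm i hi); ⟨c, hc⟩
  choose! c hc using hcomb
  -- expand the rows in `T` along `s`; a term of the expansion repeats a vector of `s`
  let K : ι → Finset M := fun i => if i ∈ T then s else {m i}
  let g : ι → M → M := fun i p => (if i ∈ T then c i p else 1) • p
  have hm_eq : m = fun i => ∑ p ∈ K i, g i p := by
    funext i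
    by_cases hi : i ∈ T <;> simp [K, g, hi, hc]
  rw [hm_eq, ← f.coe_multilinearMap, MultilinearMap.map_sum_finset]
  refine sum_eq_zero fun r hr => ?_
  obtain ⟨i, hi, j, hj, hij, hrij⟩ := exists_ne_map_eq_of_card_lt_of_maps_to hs (f := r)
    fun i hi => by
      rw [mem_coe] at hi ⊢
      simpa only [K, if_pos hi] using Fintype.mem_piFinset.mp hr i
  rw [MultilinearMap.map_smul_univ, f.coe_multilinearMap, f.map_eq_zero_of_eq r hrij hij,
    smul_zero]

theorem Matrix.det_ite_mul_eq_zero_of_card_lt {n κ R : Type*} [Fintype n] [DecidableEq n]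
    [Fintype κ] [CommRing R] (β : Matrix n κ R) (q : Matrix κ n R) (H : Matrix n n R) {T : Finset n}
    (hT : Fintype.card κ < #T) :
    (Matrix.of fun i => if i ∈ T then (β * q) i else H i).det = 0 := by
  refine Matrix.detRowAlternating.map_eq_zero_of_card_lt_of_mem_span
    (s := univ.image fun k => (q k : n → R)) (card_image_le.trans_lt hT) fun i hi => ?_
  have hrow : (β * q) i = ∑ k, β i k • (q k : n → R) := by
    ext j
    simp [Matrix.mul_apply]
  change (if i ∈ T then (β * q) i else H i) ∈ _
  rw [if_pos hi, hrow]
  exact Submodule.sum_mem _ fun k _ =>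
    Submodule.smul_mem _ _ (Submodule.subset_span (by simpa using ⟨k, rfl⟩))

namespace IsRingNorm

section Ring

variable {A : Type*} [Ring A] {v : A → ℝ}

theorem map_sub_comm (hv : IsRingNorm v) (a b : A) : v (a - b) = v (b - a) := by
  rw [← neg_sub, hv.map_neg]

theorem sub_le (hv : IsRingNorm v) (a b : A) : v (a - b) ≤ max (v a) (v b) := by
  simpa [sub_eq_add_neg, hv.map_neg] using hv.add_le a (-b)

theorem sum_le {ι : Type*} (hv : IsRingNorm v) {s : Finset ι} {f : ι → A} {B : ℝ} (hB : 0 ≤ B)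
    (h : ∀ i ∈ s, v (f i) ≤ B) : v (∑ i ∈ s, f i) ≤ B := by
  induction s using Finset.cons_induction with
  | empty => simpa [hv.map_zero] using hB
  | cons i s _ ih =>
    rw [sum_cons]
    exact (hv.add_le _ _).trans <|
      max_le (h i (mem_cons_self i s)) (ih fun j hj => h j (mem_cons_of_mem hj))

theorem pow_le (hv : IsRingNorm v) (a : A) (n : ℕ) : v (a ^ n) ≤ v a ^ n := by
  induction n with
  | zero => simp [hv.map_one]
  | succ n ih =>
    rw [pow_succ, pow_succ]
    exact (hv.mul_le _ _).trans (mul_le_mul_of_nonneg_right ih (hv.nonneg a))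

theorem intCast_unit_mul (hv : IsRingNorm v) (u : ℤˣ) (a : A) : v (((u : ℤ) : A) * a) = v a := by
  rcases Int.units_eq_one_or u with rfl | rfl <;> simp [hv.map_neg]

theorem neg_one_pow_mul (hv : IsRingNorm v) (n : ℕ) (a : A) : v ((-1) ^ n * a) = v a := by
  simpa using hv.intCast_unit_mul ((-1) ^ n) a

end Ring

variable {A : Type*} [CommRing A] {v : A → ℝ}

theorem prod_le {ι : Type*} (hv : IsRingNorm v) {s : Finset ι} {f : ι → A} {B : ι → ℝ}
    (hB : ∀ i ∈ s, 0 ≤ B i) (h : ∀ i ∈ s, v (f i) ≤ B i) : v (∏ i ∈ s, f i) ≤ ∏ i ∈ s, B i := by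
  induction s using Finset.cons_induction with
  | empty => simp [hv.map_one]
  | cons i s _ ih =>
    rw [prod_cons, prod_cons]
    exact (hv.mul_le _ _).trans <| mul_le_mul (h i (mem_cons_self i s))
      (ih (fun j hj => hB j (mem_cons_of_mem hj)) fun j hj => h j (mem_cons_of_mem hj))
      (hv.nonneg _) (hB i (mem_cons_self i s))

theorem det_le_prod (hv : IsRingNorm v) {n : Type*} [Fintype n] [DecidableEq n]
    (M : Matrix n n A) {B : n → ℝ} (hB : ∀ i, 0 ≤ B i) (h : ∀ i j, v (M i j) ≤ B i) :
    v M.det ≤ ∏ i, B i := by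
  rw [Matrix.det_apply']
  refine hv.sum_le (prod_nonneg fun i _ => hB i) fun σ _ => ?_
  rw [hv.intCast_unit_mul, ← Equiv.prod_comp σ B]
  exact hv.prod_le (fun i _ => hB (σ i)) fun i _ => h (σ i) i

theorem det_ite_le (hv : IsRingNorm v) {n : Type*} [Fintype n] [DecidableEq n]
    {G H : Matrix n n A} {C η : ℝ} (hη : 0 ≤ η) (hC : 0 ≤ C)
    (hG : ∀ i j, v (G i j) ≤ C) (hH : ∀ i j, v (H i j) ≤ η) (T : Finset n) :
    v (Matrix.of fun i => if i ∈ T then G i else H i).det ≤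
      C ^ #T * η ^ (Fintype.card n - #T) := by
  have hrow : ∀ i j, v (Matrix.of (fun i => if i ∈ T then G i else H i) i j) ≤
      T.piecewise (fun _ => C) (fun _ => η) i := by
    intro i j
    by_cases hi : i ∈ T
    · simpa [hi] using hG i j
    · simpa [hi] using hH i j
  refine (hv.det_le_prod _ (fun i => ?_) hrow).trans_eq ?_
  · by_cases hi : i ∈ T <;> simp [hi, hC, hη]
  · simp [prod_piecewise, card_univ_sdiff]


theorem det_le_of_sub_mul_le (hv : IsRingNorm v) {n κ : Type*} [Fintype n] [DecidableEq n]
    [Fintype κ] (M : Matrix n n A) (β : Matrix n κ A) (q : Matrix κ n A) {C η : ℝ}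
    (hη : 0 ≤ η) (hηC : η ≤ C) (hβq : ∀ i j, v ((β * q) i j) ≤ C)
    (hM : ∀ i j, v (M i j - (β * q) i j) ≤ η) (hκ : Fintype.card κ ≤ Fintype.card n) :
    v M.det ≤ η ^ (Fintype.card n - Fintype.card κ) * C ^ Fintype.card κ := by
  have hC : 0 ≤ C := hη.trans hηC
  rw [← add_sub_cancel (β * q) M, Matrix.det_add_eq_sum_ite]
  refine hv.sum_le (by positivity) fun T _ => ?_
  rcases le_or_gt #T (Fintype.card κ) with hT | hT
  · have h := pow_add_mul_pow_le hη hηC (Fintype.card n - Fintype.card κ) #T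
      (Fintype.card κ - #T)
    rw [show Fintype.card n - Fintype.card κ + (Fintype.card κ - #T) = Fintype.card n - #T by
      omega, show #T + (Fintype.card κ - #T) = Fintype.card κ by omega] at h
    calc _ ≤ C ^ #T * η ^ (Fintype.card n - #T) := hv.det_ite_le hη hC hβq hM T
      _ = η ^ (Fintype.card n - #T) * C ^ #T := mul_comm _ _
      _ ≤ _ := h
  · rw [Matrix.det_ite_mul_eq_zero_of_card_lt β q _ hT, hv.map_zero]
    positivity

theorem det_sub_det_le (hv : IsRingNorm v) {n : Type*} [Fintype n] [DecidableEq n]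
    (M N : Matrix n n A) {C δ : ℝ} (hδ : 0 ≤ δ) (hδC : δ ≤ C)
    (hMN : ∀ i j, v (M i j - N i j) ≤ δ) (hN : ∀ i j, v (N i j) ≤ C) :
    v (M.det - N.det) ≤ δ * C ^ (Fintype.card n - 1) := by
  have hC : 0 ≤ C := hδ.trans hδC
  rw [← sub_add_cancel M N, Matrix.det_add_eq_sum_ite, ← add_sum_erase _ _ (mem_univ ∅)]
  simp only [notMem_empty, if_false]
  rw [show (Matrix.of fun i => N i) = N from rfl, add_sub_cancel_left]
  refine hv.sum_le (by positivity) fun T hT => ?_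
  have hT₁ : 1 ≤ #T := card_pos.mpr (nonempty_iff_ne_empty.mpr (ne_of_mem_erase hT))
  have hTn : #T ≤ Fintype.card n := card_le_univ T
  have h := pow_add_mul_pow_le hδ hδC 1 (Fintype.card n - #T) (#T - 1)
  rw [show 1 + (#T - 1) = #T by omega, show Fintype.card n - #T + (#T - 1) = Fintype.card n - 1
    by omega, pow_one] at h
  exact (hv.det_ite_le hC hδ hMN hN T).trans h

end IsRingNorm

section NormSum

variable {A : Type u} [Ring A] {v : A → ℝ}

theorem HasNormSum.sub {ι : Type*} (hv : IsRingNorm v) {f g : ι → A} {x y : A}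
    (hf : HasNormSum v f x) (hg : HasNormSum v g y) :
    HasNormSum v (fun i => f i - g i) (x - y) := by
  intro ε hε
  obtain ⟨s₁, hs₁⟩ := hf ε hε
  obtain ⟨s₂, hs₂⟩ := hg ε hε
  refine ⟨s₁ ∪ s₂, fun t ht => ?_⟩
  rw [sum_sub_distrib, sub_sub_sub_comm]
  exact (hv.sub_le _ _).trans_lt <|
    max_lt (hs₁ t (subset_union_left.trans ht)) (hs₂ t (subset_union_right.trans ht))

theorem HasNormSum.le_of_forall_le {ι : Type*} (hv : IsRingNorm v) {f : ι → A} {x : A}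
    (hf : HasNormSum v f x) {B : ℝ} (hB : 0 ≤ B) (h : ∀ i, v (f i) ≤ B) : v x ≤ B := by
  by_contra! hx
  obtain ⟨s, hs⟩ := hf (v x - B) (by linarith)
  have hsum : v (∑ i ∈ s, f i) ≤ B := hv.sum_le hB fun i _ => h i
  have hx_le := hv.sub_le (∑ i ∈ s, f i) (∑ i ∈ s, f i - x)
  rw [sub_sub_cancel] at hx_le
  rcases le_max_iff.mp hx_le with h' | h' <;> linarith [hs s subset_rfl]

end NormSum

section CharSeries

variable {A : Type u} [CommRing A] {v : A → ℝ}

theorem detSubset_eq_det {I : Type v} (a : I → I → A) (S : Finset I) :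
    detSubset a S = ((Matrix.of a).submatrix ((↑) : S → I) (↑)).det := by
  rw [← Matrix.det_transpose, Matrix.det_apply']
  rfl

namespace IsCharSeries

variable {I : Type v} {a b : I → I → A} {c c' : ℕ → A}

theorem coeff_le (hv : IsRingNorm v) (hc : IsCharSeries v a c) {m : ℕ} {B : ℝ} (hB : 0 ≤ B)
    (h : ∀ S : Finset I, #S = m → v (detSubset a S) ≤ B) : v (c m) ≤ B :=
  (hc m).le_of_forall_le hv hB fun S => by
    rw [hv.neg_one_pow_mul]
    exact h S.1 S.2

theorem coeff_sub_le (hv : IsRingNorm v) (ha : IsCharSeries v a c) (hb : IsCharSeries v b c')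
    {m : ℕ} {B : ℝ} (hB : 0 ≤ B)
    (h : ∀ S : Finset I, #S = m → v (detSubset a S - detSubset b S) ≤ B) :
    v (c m - c' m) ≤ B :=
  ((ha m).sub hv (hb m)).le_of_forall_le hv hB fun S => by
    rw [← mul_sub, hv.neg_one_pow_mul]
    exact h S.1 S.2

theorem coeff_le_of_sub_mul_le (hv : IsRingNorm v) (hc : IsCharSeries v a c) {κ : Type*}
    [Fintype κ] (β : Matrix I κ A) (q : Matrix κ I A) {C η : ℝ} (hη : 0 ≤ η) (hηC : η ≤ C)
    (hβq : ∀ i j, v ((β * q) i j) ≤ C) (ha : ∀ i j, v (a i j - (β * q) i j) ≤ η) {m : ℕ}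
    (hm : Fintype.card κ ≤ m) : v (c m) ≤ η ^ (m - Fintype.card κ) * C ^ Fintype.card κ := by
  refine hc.coeff_le hv (mul_nonneg (pow_nonneg hη _) (pow_nonneg (hη.trans hηC) _)) fun S hS => ?_
  rw [detSubset_eq_det, ← hS, ← Fintype.card_coe S]
  refine hv.det_le_of_sub_mul_le _ (β.submatrix (↑) id) (q.submatrix id (↑)) hη hηC
    (fun i j => ?_) (fun i j => ?_) (by rwa [Fintype.card_coe, hS])
  · rw [← Matrix.submatrix_mul _ _ _ _ _ Function.bijective_id]
    exact hβq i j
  · rw [← Matrix.submatrix_mul _ _ _ _ _ Function.bijective_id]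
    exact ha i j

theorem coeff_sub_le_of_sub_le (hv : IsRingNorm v) (ha : IsCharSeries v a c)
    (hb : IsCharSeries v b c') {C δ : ℝ} (hδ : 0 ≤ δ) (hδC : δ ≤ C)
    (hab : ∀ i j, v (a i j - b i j) ≤ δ) (hb' : ∀ i j, v (b i j) ≤ C) (m : ℕ) :
    v (c m - c' m) ≤ δ * C ^ (m - 1) := by
  refine ha.coeff_sub_le hv hb (mul_nonneg hδ (pow_nonneg (hδ.trans hδC) _)) fun S hS => ?_
  rw [detSubset_eq_det, detSubset_eq_det, ← hS, ← Fintype.card_coe S]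
  exact hv.det_sub_det_le _ _ hδ hδC (fun i j => hab i j) fun i j => hb' i j

end IsCharSeries

end CharSeries

section Operators

variable {A : Type u} [Ring A] {v : A → ℝ}

theorem NormContinuous.exists_bound {M N : Type*} [AddCommGroup M] [Module A M]
    [AddCommGroup N] [Module A N] (hv : IsRingNorm v) {ϖ : A} (hϖu : IsUnit ϖ) (hϖ : v ϖ < 1)
    {nmM : M → ℝ} {nmN : N → ℝ} (hnmM : IsModuleNorm v nmM) (hnmN : IsModuleNorm v nmN)
    {f : M →ₗ[A] N} (hf : NormContinuous nmM nmN f) :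
    ∃ C : ℝ, 1 ≤ C ∧ ∀ x, nmM x ≤ 1 → nmN (f x) ≤ C := by
  obtain ⟨u, rfl⟩ := hϖu
  obtain ⟨δ, hδ, hfδ⟩ := hf 0 1 one_pos
  obtain ⟨k, hk⟩ := exists_pow_lt_of_lt_one hδ hϖ
  -- rescaling by `u ^ k` moves the unit ball into the ball of radius `δ` where `f` is `< 1`
  have hw : v ↑(u ^ k) < δ := by
    rw [Units.val_pow_eq_pow_val]
    exact (hv.pow_le _ k).trans_lt hk
  refine ⟨max (v ↑(u ^ k)⁻¹) 1, le_max_right _ _, fun x hx => ?_⟩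
  have hsmall : nmN (f ((↑(u ^ k) : A) • x)) < 1 := by
    simpa using hfδ ((↑(u ^ k) : A) • x) <| by
      rw [sub_zero]
      exact (hnmM.smul_le _ x).trans_lt <|
        (mul_le_of_le_one_right (hv.nonneg _) hx).trans_lt hw
  calc nmN (f x) = nmN ((↑(u ^ k)⁻¹ : A) • f ((↑(u ^ k) : A) • x)) := by
        rw [map_smul, smul_smul, Units.inv_mul, one_smul]
    _ ≤ v ↑(u ^ k)⁻¹ * 1 :=
        (hnmN.smul_le _ _).trans (mul_le_mul_of_nonneg_left hsmall.le (hv.nonneg _))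
    _ ≤ max (v ↑(u ^ k)⁻¹) 1 := by
        rw [mul_one]
        exact le_max_left _ _

theorem cNorm_bddAbove {I : Type v} (hv : IsRingNorm v) (f : cA v hv I) :
    BddAbove (Set.range fun j => v ((f : I → A) j)) := by
  obtain ⟨B, hB⟩ := ((f.2 1 one_pos).image fun j => v ((f : I → A) j)).bddAbove
  refine ⟨max B 1, ?_⟩
  rintro _ ⟨j, rfl⟩
  by_cases hj : 1 < v ((f : I → A) j)
  · exact le_max_of_le_left (hB ⟨j, hj, rfl⟩)
  · exact le_max_of_le_right (not_lt.mp hj)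

theorem le_cNorm {I : Type v} (hv : IsRingNorm v) (f : cA v hv I) (j : I) :
    v ((f : I → A) j) ≤ cNorm v f :=
  le_ciSup (cNorm_bddAbove hv f) j

theorem cNorm_stdDelta {I : Type v} (hv : IsRingNorm v) (i : I) :
    cNorm v (stdDelta v hv i) = 1 := by
  refine le_antisymm (Real.iSup_le (fun j => ?_) zero_le_one) ?_
  · by_cases hj : j = i <;> simp [stdDelta, hj, hv.map_one, hv.map_zero]
  · simpa [stdDelta, hv.map_one] using le_cNorm hv (stdDelta v hv i) i

variable {I J M N : Type v} [AddCommGroup M] [Module A M] [AddCommGroup N] [Module A N]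

theorem norm_symm_stdDelta (hv : IsRingNorm v) {nm : M → ℝ} {T : M ≃ₗ[A] cA v hv I}
    (hT : ∀ x, nm x = cNorm v (T x)) (i : I) : nm (T.symm (stdDelta v hv i)) = 1 := by
  rw [hT, LinearEquiv.apply_symm_apply, cNorm_stdDelta]

theorem v_matrixCoef_le_norm (hv : IsRingNorm v) (TM : M ≃ₗ[A] cA v hv I) {nmN : N → ℝ}
    {TN : N ≃ₗ[A] cA v hv J} (hTN : ∀ y, nmN y = cNorm v (TN y)) (f : M →ₗ[A] N) (i : I)
    (j : J) : v (matrixCoef v hv TM TN f i j) ≤ nmN (f (TM.symm (stdDelta v hv i))) := by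
  rw [hTN]
  exact le_cNorm hv _ j

theorem v_matrixCoef_le_of_bound (hv : IsRingNorm v) {nmM : M → ℝ} {nmN : N → ℝ}
    {TM : M ≃ₗ[A] cA v hv I} {TN : N ≃ₗ[A] cA v hv J} (hTM : ∀ x, nmM x = cNorm v (TM x))
    (hTN : ∀ y, nmN y = cNorm v (TN y)) {f : M →ₗ[A] N} {C : ℝ}
    (hf : ∀ x, nmM x ≤ 1 → nmN (f x) ≤ C) (i : I) (j : J) :
    v (matrixCoef v hv TM TN f i j) ≤ C :=
  (v_matrixCoef_le_norm hv TM hTN f i j).trans (hf _ (norm_symm_stdDelta hv hTM i).le)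

theorem v_matrixCoef_sub_le (hv : IsRingNorm v) {nmM : M → ℝ} {nmN : N → ℝ}
    {TM : M ≃ₗ[A] cA v hv I} {TN : N ≃ₗ[A] cA v hv J} (hTM : ∀ x, nmM x = cNorm v (TM x))
    (hTN : ∀ y, nmN y = cNorm v (TN y)) {f g : M →ₗ[A] N} {ε : ℝ}
    (hfg : ∀ x, nmN (f x - g x) ≤ ε * nmM x) (i : I) (j : J) :
    v (matrixCoef v hv TM TN f i j - matrixCoef v hv TM TN g i j) ≤ ε := by
  have h := (v_matrixCoef_le_norm hv TM hTN (f - g) i j).trans (hfg _)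
  rwa [norm_symm_stdDelta hv hTM, mul_one, matrixCoef, LinearMap.sub_apply, map_sub] at h

theorem FiniteRank.exists_matrixCoef_eq_mul (hv : IsRingNorm v) (TM : M ≃ₗ[A] cA v hv I)
    (TN : N ≃ₗ[A] cA v hv J) {g : M →ₗ[A] N} (hg : FiniteRank g) :
    ∃ (r : ℕ) (β : Matrix I (Fin r) A) (q : Matrix (Fin r) J A),
      Matrix.of (matrixCoef v hv TM TN g) = β * q := by
  obtain ⟨P, hP, hgP⟩ := hg
  obtain ⟨r, s, rfl⟩ := Submodule.fg_iff_exists_fin_generating_family.mp hP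
  choose β hβ using fun i => (Submodule.mem_span_range_iff_exists_fun A).mp
    (hgP (LinearMap.mem_range_self g (TM.symm (stdDelta v hv i))))
  refine ⟨r, Matrix.of β, Matrix.of fun k j => (TN (s k) : J → A) j, ?_⟩
  ext i j
  simp [matrixCoef, ← hβ i, Matrix.mul_apply]

end Operators

section Perturbation

variable {A : Type u} [CommRing A] {v : A → ℝ} {I M : Type v} [AddCommGroup M] [Module A M]

theorem exists_coeff_le_of_near_compact (hv : IsRingNorm v) {ϖ : A} (hϖu : IsUnit ϖ)
    (hϖ : v ϖ < 1) {nm : M → ℝ} (hnm : IsModuleNorm v nm) {T : M ≃ₗ[A] cA v hv I}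
    (hT : ∀ x, nm x = cNorm v (T x)) {φ : M →ₗ[A] M} (hφ : IsCompactOp nm nm φ) {η : ℝ}
    (hη₀ : 0 < η) (hη₁ : η < 1) {ε : ℝ} (hε : 0 < ε) :
    ∃ m₀ : ℕ, ∀ ψ : M →ₗ[A] M, (∀ x, nm (ψ x - φ x) ≤ η * nm x) →
      ∀ c : ℕ → A, IsCharSeries v (matrixCoef v hv T T ψ) c → ∀ m, m₀ ≤ m → v (c m) ≤ ε := by
  obtain ⟨g, hg_cont, hg_rank, hφg⟩ := hφ.2 η hη₀
  obtain ⟨r, β, q, hβq⟩ := hg_rank.exists_matrixCoef_eq_mul hv T T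
  obtain ⟨C, hC, hgC⟩ := hg_cont.exists_bound hv hϖu hϖ hnm hnm
  have hCr : 0 < C ^ r := pow_pos (one_pos.trans_le hC) r
  obtain ⟨k, hk⟩ := exists_pow_lt_of_lt_one (div_pos hε hCr) hη₁
  refine ⟨r + k, fun ψ hψ c hc m hm => ?_⟩
  have hψg : ∀ x, nm (ψ x - g x) ≤ η * nm x := fun x => by
    rw [← sub_add_sub_cancel _ (φ x)]
    exact (hnm.add_le _ _).trans (max_le (hψ x) (hφg x))
  have hβq_le : ∀ i j, v ((β * q) i j) ≤ C := fun i j => by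
    rw [← hβq, Matrix.of_apply]
    exact v_matrixCoef_le_of_bound hv hT hT hgC i j
  have hψβq : ∀ i j, v (matrixCoef v hv T T ψ i j - (β * q) i j) ≤ η := fun i j => by
    rw [← hβq, Matrix.of_apply]
    exact v_matrixCoef_sub_le hv hT hT hψg i j
  calc v (c m) ≤ η ^ (m - r) * C ^ r := by
        simpa using hc.coeff_le_of_sub_mul_le hv β q hη₀.le (hη₁.le.trans hC) hβq_le hψβq
          (by simp; omega)
    _ ≤ η ^ k * C ^ r :=
        mul_le_mul_of_nonneg_right (pow_le_pow_of_le_one hη₀.le hη₁.le (by omega)) hCr.le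
    _ ≤ ε := ((lt_div_iff₀ hCr).mp hk).le

theorem exists_coeff_sub_le_of_near (hv : IsRingNorm v) {nm : M → ℝ} {T : M ≃ₗ[A] cA v hv I}
    (hT : ∀ x, nm x = cNorm v (T x)) {φ : M →ₗ[A] M} {C : ℝ} (hC : 1 ≤ C)
    (hφC : ∀ x, nm x ≤ 1 → nm (φ x) ≤ C) {c : ℕ → A}
    (hc : IsCharSeries v (matrixCoef v hv T T φ) c) (m₀ : ℕ) {ε : ℝ} (hε : 0 < ε) :
    ∃ δ > 0, ∀ ψ : M →ₗ[A] M, (∀ x, nm (ψ x - φ x) ≤ δ * nm x) →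
      ∀ c' : ℕ → A, IsCharSeries v (matrixCoef v hv T T ψ) c' →
        ∀ m ≤ m₀, v (c m - c' m) ≤ ε := by
  have hCm : 0 < C ^ m₀ := pow_pos (one_pos.trans_le hC) m₀
  refine ⟨min 1 (ε / C ^ m₀), by positivity, fun ψ hψ c' hc' m hm => ?_⟩
  rw [hv.map_sub_comm]
  calc v (c' m - c m) ≤ min 1 (ε / C ^ m₀) * C ^ (m - 1) :=
        hc'.coeff_sub_le_of_sub_le hv hc (by positivity) ((min_le_left _ _).trans hC)
          (v_matrixCoef_sub_le hv hT hT hψ) (v_matrixCoef_le_of_bound hv hT hT hφC) m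
    _ ≤ ε / C ^ m₀ * C ^ m₀ := by
        gcongr
        exacts [min_le_right _ _, by omega]
    _ = ε := div_mul_cancel₀ ε hCm.ne'

end Perturbation

theorem charSeries_tendsto_of_tendsto_general
    {A : Type u} [CommRing A] (v : A → ℝ) (hA : IsBanachTate v)
    {M : Type u} [AddCommGroup M] [Module A M] (nm : M → ℝ)
    (hnm : IsModuleNorm v nm)
    {I : Type u} (T : M ≃ₗ[A] cA v hA.isRingNorm I)
    (hT : ∀ m : M, nm m = cNorm v (T m))
    (φseq : ℕ → (M →ₗ[A] M))
    (φ : M →ₗ[A] M) (hφ : IsCompactOp nm nm φ)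
    (hconv : ∀ ε : ℝ, 0 < ε → ∃ N : ℕ, ∀ n : ℕ, N ≤ n →
      ∀ m : M, nm (φseq n m - φ m) ≤ ε * nm m)
    (c : ℕ → A) (hc : IsCharSeries v (matrixCoef v hA.isRingNorm T T φ) c)
    (cseq : ℕ → ℕ → A)
    (hcseq : ∀ n, IsCharSeries v (matrixCoef v hA.isRingNorm T T (φseq n)) (cseq n)) :
    ∀ ε : ℝ, 0 < ε → ∃ N : ℕ, ∀ n : ℕ, N ≤ n → ∀ m : ℕ, v (c m - cseq n m) ≤ ε := by
  intro ε hε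
  have hv := hA.isRingNorm
  obtain ⟨ϖ, hϖu, hϖ, -⟩ := hA.exists_unit
  obtain ⟨C, hC, hφC⟩ := hφ.1.exists_bound hv hϖu hϖ hnm hnm
  obtain ⟨m₀, htail⟩ := exists_coeff_le_of_near_compact hv hϖu hϖ hnm hT hφ
    (η := 2⁻¹) (by norm_num) (by norm_num) hε
  obtain ⟨δ, hδ, hhead⟩ := exists_coeff_sub_le_of_near hv hT hC hφC hc m₀ hε
  obtain ⟨N, hN⟩ := hconv (min δ 2⁻¹) (by positivity)
  refine ⟨N, fun n hn m => ?_⟩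
  have hnear : ∀ η, min δ 2⁻¹ ≤ η → ∀ x, nm (φseq n x - φ x) ≤ η * nm x := fun η hη x =>
    (hN n hn x).trans (mul_le_mul_of_nonneg_right hη (hnm.nonneg x))
  rcases le_or_gt m m₀ with hm | hm
  · exact hhead (φseq n) (hnear δ (min_le_left _ _)) (cseq n) (hcseq n) m hm
  · have hφφ : ∀ x, nm (φ x - φ x) ≤ 2⁻¹ * nm x := fun x => by
      rw [sub_self, (hnm.eq_zero_iff 0).2 rfl]
      exact mul_nonneg (by norm_num) (hnm.nonneg x)
    exact (hv.sub_le _ _).trans <| max_le (htail φ hφφ c hc m hm.le)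
      (htail (φseq n) (hnear _ (min_le_right _ _)) (cseq n) (hcseq n) m hm.le)

/-- If a sequence of compact operators `φ_n` on an ONable Banach module
over a noetherian Banach–Tate ring converges, in the operator norm, to a compact
operator `φ`, then the characteristic power series `det(1 - Xφ_n)` converge to
`det(1 - Xφ)` uniformly in the coefficients. -/
theorem charSeries_tendsto_of_tendsto
    {A : Type u} [CommRing A] (v : A → ℝ) (hA : IsBanachTate v)
    (hnoeth : IsNoetherianRing A)
    {M : Type u} [AddCommGroup M] [Module A M] (nm : M → ℝ)
    (hnm : IsModuleNorm v nm) (hcomp : NormComplete nm)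
    {I : Type u} (T : M ≃ₗ[A] cA v hA.isRingNorm I)
    (hT : ∀ m : M, nm m = cNorm v (T m))
    (φseq : ℕ → (M →ₗ[A] M)) (hφseq : ∀ n, IsCompactOp nm nm (φseq n))
    (φ : M →ₗ[A] M) (hφ : IsCompactOp nm nm φ)
    (hconv : ∀ ε : ℝ, 0 < ε → ∃ N : ℕ, ∀ n : ℕ, N ≤ n →
      ∀ m : M, nm (φseq n m - φ m) ≤ ε * nm m)
    (c : ℕ → A) (hc : IsCharSeries v (matrixCoef v hA.isRingNorm T T φ) c)
    (cseq : ℕ → ℕ → A)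
    (hcseq : ∀ n, IsCharSeries v (matrixCoef v hA.isRingNorm T T (φseq n)) (cseq n)) :
    ∀ ε : ℝ, 0 < ε → ∃ N : ℕ, ∀ n : ℕ, N ≤ n → ∀ m : ℕ, v (c m - cseq n m) ≤ ε :=
  charSeries_tendsto_of_tendsto_general v hA nm hnm T hT φseq φ hφ hconv c hc cseq hcseq
end
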